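/- arXiv:2204.01448 — 5 statements merged into one kernel-verified Lean document; each statement's English description precedes it below -/
import Mathlib

section
/- Let x* be a local minimizer of f subject to h(x) = 0, i.e. h(x*) = 0 and f(x*) ≤ f(y) for all y in a neighborhood of x* with h(y) = 0, and assume Dh(x*) is surjective. Then ∇f(x*) = Dh(x*)*[λ(x*)] (equivalently, the orthogonal projection of ∇f(x*) onto ker Dh(x*) vanishes), and ⟨v, (∇²f(x*) − Σ_{i=1}^m λ_i(x*) ∇²h_i(x*))[v]⟩ ≥ 0 for every v ∈ ker Dh(x*). -/
open scoped RealInnerProductSpace ContDiff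

noncomputable section

variable {E : Type*} [NormedAddCommGroup E] [InnerProductSpace ℝ E] [FiniteDimensional ℝ E] {m : ℕ}

/-- The least-squares multipliers `λ(x) = (Dh(x) ∘ Dh(x)*)⁻¹ (Dh(x)[∇f(x)]) = (Dh(x)*)† ∇f(x)`.
(When `Dh(x)` is surjective, `Dh(x) ∘ Dh(x)*` is bijective and `Function.invFun` returns
its genuine inverse applied to `Dh(x)[∇f(x)]`.) -/
def lam (f : E → ℝ) (h : E → EuclideanSpace ℝ (Fin m)) (x : E) : EuclideanSpace ℝ (Fin m) :=
  Function.invFun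
    (fun y => fderiv ℝ h x (ContinuousLinearMap.adjoint (fderiv ℝ h x) y))
    (fderiv ℝ h x (gradient f x))

/-- Fletcher's augmented Lagrangian `g(x) = f(x) − ⟪λ(x), h(x)⟫ + β‖h(x)‖²`. -/
def flal (f : E → ℝ) (h : E → EuclideanSpace ℝ (Fin m)) (β : ℝ) (x : E) : ℝ :=
  f x - ⟪lam f h x, h x⟫ + β * ‖h x‖ ^ 2

/-- The smallest singular value `σ_min(A) = min_{‖y‖=1} ‖A*[y]‖` of a linear map. -/
def sigmaMin (A : E →L[ℝ] EuclideanSpace ℝ (Fin m)) : ℝ :=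
  sInf ((fun y => ‖ContinuousLinearMap.adjoint A y‖) '' {y : EuclideanSpace ℝ (Fin m) | ‖y‖ = 1})

/-- `C_λ(x) = ‖Dλ(x)‖`, the operator norm of the derivative of the multipliers. -/
def Clam (f : E → ℝ) (h : E → EuclideanSpace ℝ (Fin m)) (x : E) : ℝ :=
  ‖fderiv ℝ (lam f h) x‖

/-- `β₁(x) = σ₁(Dh(x))·C_λ(x) / (2σ_min(Dh(x))²)`. -/
def beta1 (f : E → ℝ) (h : E → EuclideanSpace ℝ (Fin m)) (x : E) : ℝ :=
  ‖fderiv ℝ h x‖ * Clam f h x / (2 * sigmaMin (fderiv ℝ h x) ^ 2)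

/-- `β₂(x) = C_λ(x)/σ_min(Dh(x))`. -/
def beta2 (f : E → ℝ) (h : E → EuclideanSpace ℝ (Fin m)) (x : E) : ℝ :=
  Clam f h x / sigmaMin (fderiv ℝ h x)

/-- `β₃(x) = 1/σ_min(Dh(x))`. -/
def beta3 (h : E → EuclideanSpace ℝ (Fin m)) (x : E) : ℝ :=
  1 / sigmaMin (fderiv ℝ h x)

lemma aux_second_deriv_nonneg {g : ℝ → ℝ} (hg : ContDiffAt ℝ 2 g 0)
    (hmin : IsLocalMin g 0) : 0 ≤ deriv (deriv g) 0 := by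
  by_contra hlt
  push_neg at hlt
  set d := deriv (deriv g) 0 with hd
  obtain ⟨u, hu, hcu⟩ := hg.contDiffOn le_rfl (by simp)
  obtain ⟨ε₀, hε₀, hball⟩ := Metric.mem_nhds_iff.1 hu
  set s : Set ℝ := Metric.ball (0:ℝ) ε₀ with hs
  have hso : IsOpen s := Metric.isOpen_ball
  have h0s : (0:ℝ) ∈ s := Metric.mem_ball_self hε₀
  have hcs : ContDiffOn ℝ 2 g s := hcu.mono hball
  have hds : ContDiffOn ℝ 1 (deriv g) s := hcs.deriv_of_isOpen hso (by norm_num)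
  have hgc : ContinuousOn g s := hcs.continuousOn
  have hd0 : deriv g 0 = 0 := hmin.deriv_eq_zero
  have hdd : HasDerivAt (deriv g) d 0 :=
    ((hds.differentiableOn (by norm_num)).differentiableAt (hso.mem_nhds h0s)).hasDerivAt
  have hslope := hasDerivAt_iff_tendsto_slope.1 hdd
  have hev : ∀ᶠ t in nhdsWithin 0 {(0:ℝ)}ᶜ, slope (deriv g) 0 t < d / 2 :=
    hslope (Iio_mem_nhds (by linarith))
  obtain ⟨ε₁, hε₁, hev1⟩ := Metric.mem_nhdsWithin_iff.1 hev
  set ε := min ε₀ ε₁ / 2 with hε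
  have hεpos : 0 < ε := by positivity
  have hεlt₀ : ε < ε₀ := by
    have := min_le_left ε₀ ε₁; simp only [hε]; linarith
  have hεlt₁ : ε < ε₁ := by
    have := min_le_right ε₀ ε₁; simp only [hε]; linarith
  have hderiv_neg : ∀ t ∈ Set.Ioc 0 ε, deriv g t < 0 := by
    intro t ht
    have htmem : t ∈ Metric.ball (0:ℝ) ε₁ ∩ {(0:ℝ)}ᶜ := by
      refine ⟨?_, fun hc => absurd hc (ne_of_gt ht.1)⟩
      simp only [Metric.mem_ball, Real.dist_eq, sub_zero]
      rw [abs_of_pos ht.1]; linarith [ht.2]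
    have := hev1 htmem
    simp only [Set.mem_setOf_eq] at this
    rw [slope_def_field, hd0, sub_zero, sub_zero, div_lt_iff₀ ht.1] at this
    nlinarith [ht.1, hlt]
  have hIcc : Set.Icc (0:ℝ) ε ⊆ s := by
    intro t ht
    simp only [hs, Metric.mem_ball, Real.dist_eq, sub_zero]
    rw [abs_of_nonneg ht.1]; linarith [ht.2]
  have hanti : StrictAntiOn g (Set.Icc 0 ε) := by
    apply strictAntiOn_of_deriv_neg (convex_Icc 0 ε) (hgc.mono hIcc)
    intro t ht
    rw [interior_Icc] at ht
    exact hderiv_neg t ⟨ht.1, le_of_lt ht.2⟩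
  have h1 : ∀ᶠ t in nhdsWithin (0:ℝ) (Set.Ioi 0), g 0 ≤ g t :=
    nhdsWithin_le_nhds hmin
  have h2 : ∀ᶠ t in nhdsWithin (0:ℝ) (Set.Ioi 0), t ∈ Set.Ioc 0 ε :=
    Ioc_mem_nhdsGT_of_mem ⟨le_rfl, hεpos⟩
  obtain ⟨t, ht1, ht2⟩ := (h1.and h2).exists
  have : g t < g 0 :=
    hanti (Set.left_mem_Icc.2 (le_of_lt hεpos)) ⟨le_of_lt ht2.1, ht2.2⟩ ht2.1
  linarith

set_option maxHeartbeats 1000000 in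
/-- First- and second-order necessary optimality conditions at a local minimizer of
`min f(x) s.t. h(x) = 0` where `Dh(x*)` is surjective (LICQ): `∇f(x*) = Dh(x*)*[λ(x*)]`
and the Lagrangian Hessian is positive semidefinite on `ker Dh(x*)`. -/
theorem necessary_optimality_conditions
    (f : E → ℝ) (h : E → EuclideanSpace ℝ (Fin m))
    (hf : ContDiff ℝ ∞ f) (hh : ContDiff ℝ ∞ h)
    (x : E) (hfeas : h x = 0)
    (hmin : ∀ᶠ y in nhds x, h y = 0 → f x ≤ f y)
    (hsurj : Function.Surjective (fderiv ℝ h x)) :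
    gradient f x = ContinuousLinearMap.adjoint (fderiv ℝ h x) (lam f h x) ∧
    ∀ v ∈ LinearMap.ker (fderiv ℝ h x : E →ₗ[ℝ] EuclideanSpace ℝ (Fin m)),
      iteratedFDeriv ℝ 2 f x ![v, v]
        - ∑ i, lam f h x i * iteratedFDeriv ℝ 2 (fun y => h y i) x ![v, v] ≥ 0 := by
  set A := fderiv ℝ h x with hA
  -- ## Part 1: first-order conditions
  have hextr : IsLocalExtrOn f {y | ∀ i, h y i = h x i} x :=
    Or.inl (eventually_nhdsWithin_iff.2 (hmin.mono fun y hy hy2 =>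
      hy (PiLp.ext fun i => by simpa [hfeas] using hy2 i)))
  have hhd : ∀ i, HasStrictFDerivAt (fun y => h y i)
      ((EuclideanSpace.proj i).comp A) x := fun i =>
    (EuclideanSpace.proj (𝕜 := ℝ) i).hasStrictFDerivAt.comp x
      (hh.contDiffAt.hasStrictFDerivAt (by norm_num))
  have hfd : HasStrictFDerivAt f (fderiv ℝ f x) x :=
    hf.contDiffAt.hasStrictFDerivAt (by norm_num)
  obtain ⟨Λ, Λ₀, hne, hsum⟩ := hextr.exists_multipliers_of_hasStrictFDerivAt hhd hfd
  have key : ∀ w, (∑ i, Λ i * A w i) + Λ₀ * fderiv ℝ f x w = 0 := by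
    intro w
    have := DFunLike.congr_fun hsum w
    simpa using this
  have hΛ₀ : Λ₀ ≠ 0 := by
    rintro rfl
    have hΛ : Λ = 0 := by
      funext i
      obtain ⟨w, hw⟩ := hsurj (EuclideanSpace.single i 1)
      have := key w
      rw [hw] at this
      simpa [EuclideanSpace.single_apply, mul_comm] using this
    exact hne (by simp [hΛ])
  set μ : EuclideanSpace ℝ (Fin m) := (-Λ₀⁻¹) • ((WithLp.equiv 2 (Fin m → ℝ)).symm Λ) with hμ
  have hgradμ : gradient f x = ContinuousLinearMap.adjoint A μ := by
    apply ext_inner_right ℝ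
    intro w
    rw [ContinuousLinearMap.adjoint_inner_left]
    have h1 : ⟪gradient f x, w⟫ = fderiv ℝ f x w := InnerProductSpace.toDual_symm_apply
    have h2 : ⟪μ, A w⟫ = (-Λ₀⁻¹) * ∑ i, Λ i * A w i := by
      simp [hμ, real_inner_smul_left, PiLp.inner_apply, RCLike.inner_apply,
        Finset.mul_sum, mul_assoc]
      exact Finset.sum_congr rfl fun i _ => by ring
    rw [h1, h2]
    have := key w
    field_simp
    linarith
  have hlam : lam f h x = μ := by
    have hinj : Function.Injective (fun y => A (ContinuousLinearMap.adjoint A y)) := by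
      intro y₁ y₂ hy
      rw [← sub_eq_zero]
      have hd : A (ContinuousLinearMap.adjoint A (y₁ - y₂)) = 0 := by
        rw [map_sub, map_sub, sub_eq_zero]; exact hy
      have h0 : ContinuousLinearMap.adjoint A (y₁ - y₂) = 0 := by
        have h2 : ⟪ContinuousLinearMap.adjoint A (y₁ - y₂),
            ContinuousLinearMap.adjoint A (y₁ - y₂)⟫ = 0 := by
          rw [ContinuousLinearMap.adjoint_inner_left, hd, inner_zero_right]
        exact inner_self_eq_zero.mp h2
      apply ext_inner_right ℝ
      intro z
      obtain ⟨w, rfl⟩ := hsurj z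
      rw [← ContinuousLinearMap.adjoint_inner_left, h0, inner_zero_left, inner_zero_left]
    rw [lam, ← hA, hgradμ]
    exact Function.leftInverse_invFun hinj μ
  have hgrad : gradient f x = ContinuousLinearMap.adjoint A (lam f h x) := by
    rw [hlam]; exact hgradμ
  refine ⟨hgrad, ?_⟩
  -- ## Part 2: second-order conditions
  intro v hv
  set l := lam f h x with hl
  -- the Lagrangian
  set L : E → ℝ := fun y => f y - ∑ i, l i * h y i with hL
  have hhi : ∀ i, ContDiff ℝ ∞ (fun y => h y i) := fun i =>
    (EuclideanSpace.proj (𝕜 := ℝ) i).contDiff.comp hh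
  have hLsmooth : ContDiff ℝ ∞ L :=
    hf.sub (ContDiff.sum fun i _ => contDiff_const.mul (hhi i))
  -- first derivative of L vanishes at x
  have hfderiv_hi : ∀ i y, fderiv ℝ (fun z => h z i) y = (EuclideanSpace.proj i).comp (fderiv ℝ h y) :=
    fun i y => (((EuclideanSpace.proj (𝕜 := ℝ) i).hasFDerivAt).comp y
      ((hh.differentiable (by simp) y).hasFDerivAt)).fderiv
  have hDL : ∀ y, fderiv ℝ L y = fderiv ℝ f y - ∑ i, l i • ((EuclideanSpace.proj i).comp (fderiv ℝ h y)) := by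
    intro y
    rw [hL]
    rw [fderiv_fun_sub (hf.differentiable (by simp) y)
      (by exact (DifferentiableAt.fun_sum fun i _ =>
        ((hhi i).differentiable (by simp) y).const_mul (l i)))]
    congr 1
    rw [fderiv_fun_sum (fun i _ => ((hhi i).differentiable (by simp) y).const_mul (l i))]
    exact Finset.sum_congr rfl fun i _ => by
      rw [fderiv_const_mul ((hhi i).differentiable (by simp) y), hfderiv_hi]
  have hDLx : fderiv ℝ L x = 0 := by
    rw [hDL x, ← hA]
    ext w
    simp only [ContinuousLinearMap.coe_sub', Pi.sub_apply, ContinuousLinearMap.coe_sum',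
      Finset.sum_apply, ContinuousLinearMap.coe_smul', Pi.smul_apply,
      ContinuousLinearMap.comp_apply, ContinuousLinearMap.zero_apply, smul_eq_mul]
    have h1 : fderiv ℝ f x w = ⟪gradient f x, w⟫ := InnerProductSpace.toDual_symm_apply.symm
    rw [h1, hgrad, ContinuousLinearMap.adjoint_inner_left]
    rw [PiLp.inner_apply]
    simp [RCLike.inner_apply, sub_eq_zero]
    exact Finset.sum_congr rfl fun i _ => mul_comm _ _
  -- the diffeomorphism Φ and the curve c
  set K : Submodule ℝ E := LinearMap.ker (A : E →ₗ[ℝ] EuclideanSpace ℝ (Fin m)) with hK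
  set T : E →L[ℝ] K × EuclideanSpace ℝ (Fin m) :=
    (K.orthogonalProjection).prod A with hT
  have hTinj : Function.Injective T := by
    intro y₁ y₂ hy
    rw [← sub_eq_zero]
    have hy' : T (y₁ - y₂) = 0 := by rw [map_sub, hy, sub_self]
    set d := y₁ - y₂ with hdd
    have h1 : K.orthogonalProjection d = 0 ∧ A d = 0 := Prod.mk.injEq .. ▸ Prod.ext_iff.1 hy'
    have hdK : d ∈ K := h1.2
    have := Submodule.orthogonalProjection_mem_subspace_eq_self (⟨d, hdK⟩ : K)
    rw [h1.1] at this
    simpa using congrArg Subtype.val this.symm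
  have hfr : Module.finrank ℝ E = Module.finrank ℝ (K × EuclideanSpace ℝ (Fin m)) := by
    have h1 := LinearMap.finrank_range_add_finrank_ker (A : E →ₗ[ℝ] EuclideanSpace ℝ (Fin m))
    have h2 : LinearMap.range (A : E →ₗ[ℝ] EuclideanSpace ℝ (Fin m)) = ⊤ :=
      LinearMap.range_eq_top.2 hsurj
    rw [h2, finrank_top] at h1
    simp only [Module.finrank_prod, finrank_euclideanSpace, Fintype.card_fin, ← h1]
    ring_nf
    rfl
  set eq : E ≃ₗ[ℝ] K × EuclideanSpace ℝ (Fin m) :=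
    LinearMap.linearEquivOfInjective (T : E →ₗ[ℝ] K × EuclideanSpace ℝ (Fin m)) hTinj hfr with heq
  set e : E ≃L[ℝ] K × EuclideanSpace ℝ (Fin m) := eq.toContinuousLinearEquiv with he0
  have he : (e : E →L[ℝ] K × EuclideanSpace ℝ (Fin m)) = T := by
    ext y
    · rfl
    · rfl
  set Φ : E → K × EuclideanSpace ℝ (Fin m) :=
    fun y => (K.orthogonalProjection (y - x), h y) with hΦ
  have hΦdiff : ContDiffAt ℝ ∞ Φ x :=
    (((K.orthogonalProjection).contDiff.comp (contDiff_id.sub contDiff_const)).prodMk hh).contDiffAt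
  have hΦ' : HasFDerivAt Φ (e : E →L[ℝ] K × EuclideanSpace ℝ (Fin m)) x := by
    rw [he]
    apply HasFDerivAt.prodMk
    · have h1 : HasFDerivAt (fun y : E => y - x) (ContinuousLinearMap.id ℝ E) x :=
        (hasFDerivAt_id x).sub_const x
      have h2 := (K.orthogonalProjection).hasFDerivAt.comp x h1
      rw [ContinuousLinearMap.comp_id] at h2
      exact h2
    · exact (hh.differentiable (by simp) x).hasFDerivAt
  have hn : (∞ : WithTop ℕ∞) ≠ 0 := by simp
  have hΦstrict : HasStrictFDerivAt Φ (e : E →L[ℝ] K × EuclideanSpace ℝ (Fin m)) x :=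
    hΦdiff.hasStrictFDerivAt' hΦ' hn
  set inv : K × EuclideanSpace ℝ (Fin m) → E := hΦdiff.localInverse hΦ' hn with hinv
  have hinv_smooth : ContDiffAt ℝ ∞ inv (Φ x) := hΦdiff.to_localInverse hΦ' hn
  have hΦx : Φ x = 0 := by
    simp [hΦ, hfeas]
  set vK : K := ⟨v, hv⟩ with hvK
  set ψ : ℝ → K × EuclideanSpace ℝ (Fin m) :=
    fun t => t • ((vK, 0) : K × EuclideanSpace ℝ (Fin m)) with hψ
  have hψ0 : ψ 0 = Φ x := by simp [hψ, hΦx]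
  set c : ℝ → E := fun t => inv (ψ t) with hc
  have hψsmooth : ContDiff ℝ ∞ ψ := contDiff_id.smul contDiff_const
  have hc_smooth : ContDiffAt ℝ ∞ c 0 := by
    apply ContDiffAt.comp
    · rw [hψ0]; exact hinv_smooth
    · exact hψsmooth.contDiffAt
  have hc0 : c 0 = x := by
    have : c 0 = inv (Φ x) := by rw [hc]; simp only [hψ0]
    rw [this, hinv]
    exact hΦdiff.localInverse_apply_image hΦ' hn
  have hright : ∀ᶠ t in nhds (0:ℝ), Φ (c t) = ψ t := by
    have h1 : ∀ᶠ p in nhds (Φ x), Φ (inv p) = p := hΦstrict.eventually_right_inverse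
    have h2 : Filter.Tendsto ψ (nhds 0) (nhds (Φ x)) := by
      rw [← hψ0]
      exact hψsmooth.continuous.continuousAt
    exact h2.eventually h1
  have hch : ∀ᶠ t in nhds (0:ℝ), h (c t) = 0 := by
    filter_upwards [hright] with t ht
    have := congrArg Prod.snd ht
    simpa [hΦ, hψ] using this
  have hcd : HasDerivAt c v 0 := by
    have hinvd : HasFDerivAt inv
        ((e.symm : K × EuclideanSpace ℝ (Fin m) →L[ℝ] E)) (Φ x) :=
      hΦstrict.to_localInverse.hasFDerivAt
    have hψd : HasDerivAt ψ ((vK, 0) : K × EuclideanSpace ℝ (Fin m)) 0 := by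
      have h5 := (hasDerivAt_id (0:ℝ)).smul_const ((vK, 0) : K × EuclideanSpace ℝ (Fin m))
      rw [one_smul] at h5
      exact h5
    have hcomp := HasFDerivAt.comp_hasDerivAt 0 (hψ0 ▸ hinvd) hψd
    have hev : e.symm ((vK, 0) : K × EuclideanSpace ℝ (Fin m)) = v := by
      rw [ContinuousLinearEquiv.symm_apply_eq]
      have : e v = T v := by rw [← he]; rfl
      rw [this, hT]
      have h1 : K.orthogonalProjection v = vK :=
        Submodule.orthogonalProjection_mem_subspace_eq_self vK
      have h2 : A v = 0 := hv
      simp [ContinuousLinearMap.prod_apply, h1, h2]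
    rw [← hev]
    exact hcomp
  -- the function along the curve
  set φ : ℝ → ℝ := fun t => L (c t) with hφ
  have hφmin : IsLocalMin φ 0 := by
    have hc_cont : Filter.Tendsto c (nhds 0) (nhds x) := by
      have := hc_smooth.continuousAt
      rwa [ContinuousAt, hc0] at this
    have h3 : ∀ᶠ t in nhds (0:ℝ), h (c t) = 0 → f x ≤ f (c t) := hc_cont.eventually hmin
    filter_upwards [hch, h3] with t ht1 ht2
    have hφt : φ t = f (c t) := by
      simp [hφ, hL, ht1]
    have hφ0 : φ 0 = f x := by
      simp [hφ, hL, hc0, hfeas]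
    rw [hφt, hφ0]
    exact ht2 ht1
  have hφ2 : ContDiffAt ℝ 2 φ 0 :=
    (hLsmooth.contDiffAt.comp 0 hc_smooth).of_le (by exact WithTop.coe_le_coe.2 le_top)
  -- compute the second derivative of φ at 0
  obtain ⟨u, hu, hcu⟩ := (hc_smooth.of_le (show (2:WithTop ℕ∞) ≤ ∞ by exact WithTop.coe_le_coe.2 le_top)).contDiffOn
    le_rfl (by simp)
  obtain ⟨ε₀, hε₀, hball⟩ := Metric.mem_nhds_iff.1 hu
  set s : Set ℝ := Metric.ball (0:ℝ) ε₀ with hsdef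
  have hso : IsOpen s := Metric.isOpen_ball
  have h0s : (0:ℝ) ∈ s := Metric.mem_ball_self hε₀
  have hcs : ContDiffOn ℝ 2 c s := hcu.mono hball
  have hcdiff : ∀ t ∈ s, HasDerivAt c (deriv c t) t := fun t ht =>
    ((hcs.differentiableOn (by simp)).differentiableAt (hso.mem_nhds ht)).hasDerivAt
  have hLd : ∀ y : E, HasFDerivAt L (fderiv ℝ L y) y := fun y =>
    ((hLsmooth.differentiable (by simp)) y).hasFDerivAt
  have hφev : deriv φ =ᶠ[nhds 0] fun t => fderiv ℝ L (c t) (deriv c t) := by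
    filter_upwards [hso.mem_nhds h0s] with t ht
    exact (HasFDerivAt.comp_hasDerivAt t (hLd (c t)) (hcdiff t ht)).deriv
  have hL2 : ContDiff ℝ 1 (fderiv ℝ L) :=
    hLsmooth.fderiv_right (by exact WithTop.coe_le_coe.2 le_top)
  have hu' : HasDerivAt (fun t => fderiv ℝ L (c t)) (fderiv ℝ (fderiv ℝ L) x v) 0 := by
    have h1 : HasFDerivAt (fderiv ℝ L) (fderiv ℝ (fderiv ℝ L) x) x :=
      ((hL2.differentiable (by simp)) x).hasFDerivAt
    exact HasFDerivAt.comp_hasDerivAt_of_eq 0 h1 hcd hc0.symm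
  have hw' : HasDerivAt (fun t => deriv c t) (deriv (deriv c) 0) 0 := by
    have hds : ContDiffOn ℝ 1 (deriv c) s := hcs.deriv_of_isOpen hso le_rfl
    exact ((hds.differentiableOn (by simp)).differentiableAt (hso.mem_nhds h0s)).hasDerivAt
  have hcomb : HasDerivAt (fun t => fderiv ℝ L (c t) (deriv c t))
      (fderiv ℝ (fderiv ℝ L) x v (deriv c 0) + fderiv ℝ L (c 0) (deriv (deriv c) 0)) 0 :=
    hu'.clm_apply hw'
  have hder2 : deriv (deriv φ) 0 = fderiv ℝ (fderiv ℝ L) x v v := by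
    rw [hφev.deriv_eq, hcomb.deriv, hc0, hDLx, hcd.deriv]
    simp
  have hpos := aux_second_deriv_nonneg hφ2 hφmin
  rw [hder2] at hpos
  -- convert the Hessian of `L` into Hessians of `f` and `h i`
  have hhi2 : ∀ i, DifferentiableAt ℝ (fderiv ℝ (fun y => h y i)) x := fun i =>
    (((hhi i).fderiv_right (by exact WithTop.coe_le_coe.2 le_top) :
      ContDiff ℝ 1 _).differentiable (by simp)) x
  have hf2 : DifferentiableAt ℝ (fderiv ℝ f) x :=
    ((hf.fderiv_right (by exact WithTop.coe_le_coe.2 le_top) :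
      ContDiff ℝ 1 _).differentiable (by simp)) x
  have hsplit : fderiv ℝ (fderiv ℝ L) x
      = fderiv ℝ (fderiv ℝ f) x - ∑ i, l i • fderiv ℝ (fderiv ℝ (fun y => h y i)) x := by
    have hfun : fderiv ℝ L = fun y => fderiv ℝ f y - ∑ i, l i • fderiv ℝ (fun z => h z i) y := by
      funext y
      rw [hDL y]
      congr 1
      exact Finset.sum_congr rfl fun i _ => by rw [hfderiv_hi i y]
    rw [hfun]
    rw [fderiv_fun_sub hf2 (DifferentiableAt.fun_sum fun i _ => (hhi2 i).fun_const_smul (l i))]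
    congr 1
    rw [fderiv_fun_sum (fun i _ => (hhi2 i).fun_const_smul (l i))]
    exact Finset.sum_congr rfl fun i _ => fderiv_fun_const_smul (hhi2 i) (l i)
  rw [hsplit] at hpos
  simp only [ContinuousLinearMap.coe_sub', Pi.sub_apply, ContinuousLinearMap.coe_sum',
    Finset.sum_apply, ContinuousLinearMap.coe_smul', Pi.smul_apply, smul_eq_mul] at hpos
  rw [ge_iff_le, sub_nonneg]
  have e1 : iteratedFDeriv ℝ 2 f x ![v, v] = fderiv ℝ (fderiv ℝ f) x v v := by
    rw [iteratedFDeriv_two_apply]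
    simp
  have e2 : ∀ i, iteratedFDeriv ℝ 2 (fun y => h y i) x ![v, v]
      = fderiv ℝ (fderiv ℝ (fun y => h y i)) x v v := by
    intro i
    rw [iteratedFDeriv_two_apply]
    simp
  rw [e1]
  calc ∑ i, l i * iteratedFDeriv ℝ 2 (fun y => h y i) x ![v, v]
      = ∑ i, l i * fderiv ℝ (fderiv ℝ (fun y => h y i)) x v v :=
        Finset.sum_congr rfl fun i _ => by rw [e2 i]
    _ ≤ fderiv ℝ (fderiv ℝ f) x v v := by linarith [hpos]
end
end

section
/- Let x ∈ E with Dh(x) surjective, h(x) = 0 and ∇f(x) = Dh(x)*[λ(x)] (i.e., x is a first-order critical point of the problem min f subject to h = 0). Then for every β ≥ 0, ∇g(x) = 0, where g is Fletcher's augmented Lagrangian with penalty β. -/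
open scoped RealInnerProductSpace ContDiff

noncomputable section

variable {E : Type*} [NormedAddCommGroup E] [InnerProductSpace ℝ E] [FiniteDimensional ℝ E] {m : ℕ}

open ContinuousLinearMap in
lemma lam_continuousAt (f : E → ℝ) (h : E → EuclideanSpace ℝ (Fin m))
    (hf : ContDiff ℝ ∞ f) (hh : ContDiff ℝ ∞ h)
    (x : E) (hsurj : Function.Surjective (fderiv ℝ h x)) :
    ContinuousAt (lam f h) x := by
  have hone : (1 : WithTop ℕ∞) ≤ ∞ := by exact_mod_cast le_top
  set T : E → (EuclideanSpace ℝ (Fin m) →L[ℝ] EuclideanSpace ℝ (Fin m)) :=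
    fun z => (fderiv ℝ h z).comp (adjoint (fderiv ℝ h z)) with hT
  have contfd : Continuous (fun z => fderiv ℝ h z) := hh.continuous_fderiv (by simp)
  have contT : Continuous T :=
    contfd.clm_comp ((adjoint : _ ≃ₗᵢ⋆[ℝ] _).continuous.comp contfd)
  have contb : Continuous (fun z => fderiv ℝ h z (gradient f z)) := by
    apply contfd.clm_apply
    exact (InnerProductSpace.toDual ℝ E).symm.continuous.comp (hf.continuous_fderiv (by simp))
  have hinj : Function.Injective (T x) := by
    intro y y' hy
    rw [← sub_eq_zero, ← map_sub] at hy
    set w := y - y' with hw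
    have h0 : ⟪w, T x w⟫ = 0 := by rw [hy]; simp
    rw [hT] at h0
    simp only [coe_comp', Function.comp_apply] at h0
    rw [← adjoint_inner_left] at h0
    have hadj : adjoint (fderiv ℝ h x) w = 0 := by
      rwa [inner_self_eq_zero] at h0
    have hw0 : w = 0 := by
      apply ext_inner_right ℝ
      intro v
      obtain ⟨u, hu⟩ := hsurj v
      rw [← hu, ← adjoint_inner_left, hadj]
      simp
    rw [← sub_eq_zero]; exact hw0
  have hbij : Function.Bijective (T x) := by
    refine ⟨hinj, ?_⟩
    have := (LinearMap.injective_iff_surjective (f := (T x : EuclideanSpace ℝ (Fin m) →ₗ[ℝ] EuclideanSpace ℝ (Fin m)))).mp hinj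
    exact this
  have hunit : IsUnit (T x) := isUnit_iff_bijective.mpr hbij
  have hev : ∀ᶠ z in nhds x, IsUnit (T z) :=
    contT.continuousAt (Units.isOpen.mem_nhds hunit)
  have lam_eq : ∀ z, IsUnit (T z) → lam f h z = Ring.inverse (T z) (fderiv ℝ h z (gradient f z)) := by
    intro z hz
    have hbz : Function.Bijective (T z) := isUnit_iff_bijective.mp hz
    have h1 : (fun y => fderiv ℝ h z (adjoint (fderiv ℝ h z) y)) = ⇑(T z) := rfl
    rw [lam, h1]
    apply hbz.injective
    rw [Function.invFun_eq (hbz.surjective _)]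
    rw [← ContinuousLinearMap.mul_apply, Ring.mul_inverse_cancel _ hz,
      ContinuousLinearMap.one_apply]
  obtain ⟨u, hu⟩ := hunit
  have continv : ContinuousAt (fun z => Ring.inverse (T z)) x := by
    have h2 : ContinuousAt Ring.inverse (T x) := hu ▸ NormedRing.inverse_continuousAt u
    exact h2.comp contT.continuousAt
  have contι : ContinuousAt (fun z => Ring.inverse (T z) (fderiv ℝ h z (gradient f z))) x :=
    continv.clm_apply contb.continuousAt
  refine contι.congr ?_
  filter_upwards [hev] with z hz
  exact (lam_eq z hz).symm

open ContinuousLinearMap Asymptotics in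
/-- If `x` is a first-order critical point of `min f s.t. h = 0` (feasible, LICQ, and
`∇f(x) = Dh(x)*[λ(x)]`), then for every `β ≥ 0`, `x` is a critical point of Fletcher's
augmented Lagrangian: `∇g(x) = 0`. -/
theorem critical_point_of_problem_is_critical_point_of_fletcher
    (f : E → ℝ) (h : E → EuclideanSpace ℝ (Fin m))
    (hf : ContDiff ℝ ∞ f) (hh : ContDiff ℝ ∞ h)
    (x : E) (hsurj : Function.Surjective (fderiv ℝ h x)) (hfeas : h x = 0)
    (hcrit : gradient f x = ContinuousLinearMap.adjoint (fderiv ℝ h x) (lam f h x)) :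
    ∀ β : ℝ, 0 ≤ β → gradient (flal f h β) x = 0 := by
  intro β hβ
  have hone : (1 : WithTop ℕ∞) ≤ ∞ := by exact_mod_cast le_top
  have hdf : HasFDerivAt f (fderiv ℝ f x) x :=
    ((hf.differentiable (by simp)) x).hasFDerivAt
  have hdh : HasFDerivAt h (fderiv ℝ h x) x :=
    ((hh.differentiable (by simp)) x).hasFDerivAt
  have hL : ContinuousAt (lam f h) x := lam_continuousAt f h hf hh x hsurj
  -- the putative derivative of z ↦ ⟪lam z, h z⟫ at x
  set φ' : E →L[ℝ] ℝ := (innerSL ℝ (lam f h x)).comp (fderiv ℝ h x) with hφ'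
  have hφ : HasFDerivAt (fun z => ⟪lam f h z, h z⟫) φ' x := by
    rw [hasFDerivAt_iff_isLittleO]
    have e1 : (fun z => ⟪lam f h z, h z⟫ - ⟪lam f h x, h x⟫ - φ' (z - x)) =
        (fun z => ⟪lam f h z - lam f h x, h z⟫ +
          ⟪lam f h x, h z - h x - fderiv ℝ h x (z - x)⟫) := by
      funext z
      simp only [hφ', coe_comp', Function.comp_apply, innerSL_apply_apply, hfeas,
        inner_zero_right, inner_sub_left, inner_sub_right]
      ring
    rw [e1]
    apply IsLittleO.add
    · have hlam : (fun z => lam f h z - lam f h x) =o[nhds x] (fun _ => (1:ℝ)) := by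
        rw [isLittleO_one_iff]
        have h3 : Filter.Tendsto (lam f h) (nhds x) (nhds (lam f h x)) := hL
        simpa using h3.sub_const (lam f h x)
      have hhO : (fun z => h z) =O[nhds x] (fun z => z - x) := by
        have h4 := hdh.isBigO_sub
        simpa [hfeas] using h4
      have hbound : (fun z => ⟪lam f h z - lam f h x, h z⟫) =O[nhds x]
          (fun z => ‖lam f h z - lam f h x‖ * ‖h z‖) := by
        refine IsBigO.of_bound 1 (Filter.Eventually.of_forall fun z => ?_)
        rw [one_mul]
        calc ‖⟪lam f h z - lam f h x, h z⟫‖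
            ≤ ‖lam f h z - lam f h x‖ * ‖h z‖ := norm_inner_le_norm _ _
          _ ≤ ‖‖lam f h z - lam f h x‖ * ‖h z‖‖ := le_abs_self _
      refine hbound.trans_isLittleO ?_
      have h5 := hlam.norm_left.mul_isBigO hhO.norm_norm
      refine (h5.congr' (by rfl) ?_).of_norm_right
      filter_upwards with z
      rw [one_mul]
    · exact ((innerSL ℝ (lam f h x)).isBigO_comp
        (fun z => h z - h x - fderiv ℝ h x (z - x)) (nhds x)).trans_isLittleO hdh.isLittleO
  -- derivative of z ↦ β * ‖h z‖ ^ 2 is zero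
  have hψ : HasFDerivAt (fun z => β * ‖h z‖ ^ 2) (0 : E →L[ℝ] ℝ) x := by
    have hi : HasFDerivAt (fun z => ⟪h z, h z⟫) (0 : E →L[ℝ] ℝ) x := by
      have := hdh.inner ℝ hdh
      refine this.congr_fderiv ?_
      ext v
      simp [hfeas]
    have h2 : HasFDerivAt (fun z => β * ⟪h z, h z⟫) (β • (0 : E →L[ℝ] ℝ)) x := hi.const_mul β
    have heq : (fun z => β * ⟪h z, h z⟫) = fun z => β * ‖h z‖ ^ 2 := by
      funext z; rw [real_inner_self_eq_norm_sq]
    rw [heq] at h2; simpa using h2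
  -- fderiv f x = φ'
  have hfd : fderiv ℝ f x = φ' := by
    have h1 : fderiv ℝ f x = InnerProductSpace.toDual ℝ E (gradient f x) := by
      rw [gradient, LinearIsometryEquiv.apply_symm_apply]
    ext v
    rw [h1, hcrit]
    simp only [InnerProductSpace.toDual_apply_apply, hφ', coe_comp', Function.comp_apply,
      innerSL_apply_apply]
    exact adjoint_inner_left _ _ _
  have hflal : HasFDerivAt (flal f h β) (0 : E →L[ℝ] ℝ) x := by
    have := (hdf.sub hφ).add hψ
    rw [hfd] at this
    simp only [sub_self, add_zero] at this; exact this
  have hgrad : HasGradientAt (flal f h β) 0 x := by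
    have := (hasFDerivAt_iff_hasGradientAt).mp hflal
    simpa using this
  exact hgrad.gradient
end
end

section
/- Let x ∈ D (i.e., Dh(x) is surjective) and let β > β₁(x) := σ₁(Dh(x))·C_λ(x) / (2 σ_min(Dh(x))²). If ∇g(x) = 0, then h(x) = 0 and ∇f(x) = Dh(x)*[λ(x)]; that is, x is a first-order critical point of the problem min f subject to h = 0. -/
/-!
At `x` the gradient of Fletcher's function is `∇g = ∇f − Dh*λ − Dλ*h + 2β Dh*h`. Pairing `∇g = 0`
with `Dh*h` kills the first two terms, because `λ` solves `Dh Dh* λ = Dh ∇f`; what remains is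
`2β ‖Dh*h‖² = ⟪h, Dλ Dh*h⟫ ≤ σ₁ C_λ ‖h‖²`. Together with `‖Dh*h‖ ≥ σ_min ‖h‖` and `β > β₁` this
forces `h(x) = 0`, and then `∇g = 0` reads `∇f = Dh*λ`. Differentiability of `λ` comes from
writing it as `(Dh Dh*)⁻¹ Dh ∇f` on the open set where the Gram operator `Dh Dh*` is invertible.
-/

open scoped RealInnerProductSpace ContDiff

noncomputable section

variable {E : Type*} [NormedAddCommGroup E] [InnerProductSpace ℝ E] [FiniteDimensional ℝ E] {m : ℕ}

open ContinuousLinearMap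

section AdjointFacts

variable {V W : Type*} [NormedAddCommGroup V] [InnerProductSpace ℝ V] [CompleteSpace V]
  [NormedAddCommGroup W] [InnerProductSpace ℝ W] [CompleteSpace W]

theorem ContinuousLinearMap.injective_adjoint_of_surjective {A : V →L[ℝ] W}
    (hA : Function.Surjective A) : Function.Injective (adjoint A) := by
  rw [← coe_coe, ← LinearMap.ker_eq_bot, ← A.orthogonal_range, LinearMap.range_eq_top.mpr hA,
    Submodule.top_orthogonal_eq_bot]

theorem ContinuousLinearMap.bijective_comp_adjoint_of_surjective [FiniteDimensional ℝ W]
    {A : V →L[ℝ] W} (hA : Function.Surjective A) : Function.Bijective (A ∘L adjoint A) := by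
  have hinj : Function.Injective (A ∘L adjoint A) :=
    A.self_comp_adjoint_injective_iff.mpr (injective_adjoint_of_surjective hA)
  exact ⟨hinj, LinearMap.injective_iff_surjective.mp hinj⟩

theorem ContinuousLinearMap.invFun_eq_ring_inverse_apply {G : W →L[ℝ] W} (hG : IsUnit G)
    (w : W) : Function.invFun G w = Ring.inverse G w := by
  have hbij := isUnit_iff_bijective.mp hG
  obtain ⟨u, rfl⟩ := hG
  apply hbij.injective
  rw [Function.invFun_eq (hbij.surjective w), Ring.inverse_unit]
  exact (DFunLike.congr_fun u.mul_inv w).symm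

theorem DifferentiableAt.clm_adjoint {U : Type*} [NormedAddCommGroup U] [NormedSpace ℝ U]
    {A : U → V →L[ℝ] W} {x : U} (hA : DifferentiableAt ℝ A x) :
    DifferentiableAt ℝ (fun y => adjoint (A y)) x :=
  (((adjoint : (V →L[ℝ] W) ≃ₗᵢ⋆[ℝ] (W →L[ℝ] V)) : (V →L[ℝ] W) →+ (W →L[ℝ] V)).toRealLinearMap
    adjoint.continuous).differentiableAt.comp x hA

theorem DifferentiableAt.gradient_of_fderiv {f : V → ℝ} {x : V}
    (hf : DifferentiableAt ℝ (fderiv ℝ f) x) : DifferentiableAt ℝ (gradient f) x :=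
  ((((InnerProductSpace.toDual ℝ V).symm : StrongDual ℝ V ≃ₗᵢ⋆[ℝ] V) : StrongDual ℝ V →+ V
    ).toRealLinearMap (InnerProductSpace.toDual ℝ V).symm.continuous).differentiableAt.comp x hf

theorem eq_zero_of_sub_adjoint_add_smul_adjoint_eq_zero {A L : V →L[ℝ] W} {g : V} {μ y : W}
    {β s : ℝ} (hs : 0 ≤ s) (hsA : ∀ z, s * ‖z‖ ≤ ‖adjoint A z‖)
    (hβ : ‖A‖ * ‖L‖ < 2 * β * s ^ 2) (hμ : A (adjoint A μ) = A g)
    (hstat : g - adjoint A μ - adjoint L y + (2 * β) • adjoint A y = 0) : y = 0 := by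
  set v := adjoint A y
  have hres : ⟪g - adjoint A μ, v⟫ = 0 := by
    rw [adjoint_inner_right, map_sub, hμ, sub_self, inner_zero_left]
  have hpair : 2 * β * ‖v‖ ^ 2 = ⟪adjoint L y, v⟫ := by
    have := congrArg (⟪·, v⟫) hstat
    simp only [inner_add_left, inner_sub_left, inner_smul_left, hres, inner_zero_left,
      conj_trivial] at this
    rw [← real_inner_self_eq_norm_sq]
    linarith
  have hv : ‖v‖ ≤ ‖A‖ * ‖y‖ := by
    simpa [LinearIsometryEquiv.norm_map] using (adjoint A).le_opNorm y
  have hupper : ⟪adjoint L y, v⟫ ≤ ‖A‖ * ‖L‖ * ‖y‖ ^ 2 := calc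
    ⟪adjoint L y, v⟫ = ⟪y, L v⟫ := adjoint_inner_left L v y
    _ ≤ ‖y‖ * (‖L‖ * ‖v‖) := (real_inner_le_norm _ _).trans (by gcongr; exact L.le_opNorm v)
    _ ≤ ‖y‖ * (‖L‖ * (‖A‖ * ‖y‖)) := by gcongr
    _ = ‖A‖ * ‖L‖ * ‖y‖ ^ 2 := by ring
  have hβ0 : 0 ≤ β := by
    by_contra! hneg
    nlinarith [norm_nonneg A, norm_nonneg L, sq_nonneg s]
  have hlower : 2 * β * s ^ 2 * ‖y‖ ^ 2 ≤ 2 * β * ‖v‖ ^ 2 := by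
    rw [mul_assoc, ← mul_pow]
    gcongr
    exact hsA y
  by_contra hy
  have hy2 : 0 < ‖y‖ ^ 2 := by positivity
  nlinarith [mul_lt_mul_of_pos_right hβ hy2]

end AdjointFacts

theorem sigmaMin_nonneg (A : E →L[ℝ] EuclideanSpace ℝ (Fin m)) : 0 ≤ sigmaMin A :=
  Real.sInf_nonneg (by rintro t ⟨y, -, rfl⟩; exact norm_nonneg _)

theorem sigmaMin_mul_norm_le (A : E →L[ℝ] EuclideanSpace ℝ (Fin m))
    (y : EuclideanSpace ℝ (Fin m)) : sigmaMin A * ‖y‖ ≤ ‖adjoint A y‖ := by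
  rcases eq_or_ne y 0 with rfl | hy
  · simp
  have hny : 0 < ‖y‖ := norm_pos_iff.mpr hy
  have hmem : ‖y‖⁻¹ * ‖adjoint A y‖ ∈
      (fun y => ‖adjoint A y‖) '' {y : EuclideanSpace ℝ (Fin m) | ‖y‖ = 1} :=
    ⟨‖y‖⁻¹ • y, by simp [norm_smul, hny.ne'], by simp [norm_smul]⟩
  have hle : sigmaMin A ≤ ‖y‖⁻¹ * ‖adjoint A y‖ :=
    csInf_le ⟨0, by rintro t ⟨z, -, rfl⟩; exact norm_nonneg _⟩ hmem
  rwa [← le_div_iff₀ hny, div_eq_inv_mul]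

theorem sigmaMin_pos [Nontrivial (EuclideanSpace ℝ (Fin m))]
    {A : E →L[ℝ] EuclideanSpace ℝ (Fin m)} (hA : Function.Injective (adjoint A)) :
    0 < sigmaMin A := by
  have hsphere : {y : EuclideanSpace ℝ (Fin m) | ‖y‖ = 1} = Metric.sphere 0 1 := by
    ext y; simp
  obtain ⟨y₀, hy₀, hmin⟩ := ((isCompact_sphere (0 : EuclideanSpace ℝ (Fin m)) 1).image
    (adjoint A).continuous.norm).sInf_mem
    ((NormedSpace.sphere_nonempty.mpr zero_le_one).image _)
  rw [sigmaMin, hsphere, ← hmin, norm_pos_iff, Ne, ← map_zero (adjoint A), hA.eq_iff]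
  rintro rfl
  simp at hy₀

section Multipliers

variable (f : E → ℝ) (h : E → EuclideanSpace ℝ (Fin m)) {x : E}

theorem lam_eq_ring_inverse (hx : IsUnit (fderiv ℝ h x ∘L adjoint (fderiv ℝ h x))) :
    lam f h x = Ring.inverse (fderiv ℝ h x ∘L adjoint (fderiv ℝ h x))
      (fderiv ℝ h x (gradient f x)) :=
  invFun_eq_ring_inverse_apply hx _

theorem fderiv_adjoint_lam (hx : Function.Surjective (fderiv ℝ h x)) :
    fderiv ℝ h x (adjoint (fderiv ℝ h x) (lam f h x)) = fderiv ℝ h x (gradient f x) :=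
  Function.invFun_eq ((bijective_comp_adjoint_of_surjective hx).2 _)

theorem differentiableAt_lam (hf : ContDiff ℝ 2 f) (hh : ContDiff ℝ 2 h)
    (hx : Function.Surjective (fderiv ℝ h x)) : DifferentiableAt ℝ (lam f h) x := by
  have hDf : Differentiable ℝ (fderiv ℝ f) :=
    (hf.fderiv_right (m := 1) le_rfl).differentiable one_ne_zero
  have hDh : Differentiable ℝ (fderiv ℝ h) :=
    (hh.fderiv_right (m := 1) le_rfl).differentiable one_ne_zero
  have hgram : DifferentiableAt ℝ (fun y => fderiv ℝ h y ∘L adjoint (fderiv ℝ h y)) x :=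
    (hDh x).clm_comp (hDh x).clm_adjoint
  have hunit : IsUnit (fderiv ℝ h x ∘L adjoint (fderiv ℝ h x)) :=
    isUnit_iff_bijective.mpr (bijective_comp_adjoint_of_surjective hx)
  have hnear : ∀ᶠ y in nhds x, IsUnit (fderiv ℝ h y ∘L adjoint (fderiv ℝ h y)) :=
    hgram.continuousAt.preimage_mem_nhds (Units.isOpen.mem_nhds hunit)
  refine ((hgram.inverse hunit).clm_apply ((hDh x).clm_apply (hDf x).gradient_of_fderiv))
    |>.congr_of_eventuallyEq ?_
  filter_upwards [hnear] with y hy using lam_eq_ring_inverse f h hy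

theorem hasGradientAt_flal (β : ℝ) (hf : DifferentiableAt ℝ f x) (hh : DifferentiableAt ℝ h x)
    (hlam : DifferentiableAt ℝ (lam f h) x) :
    HasGradientAt (flal f h β) (gradient f x - adjoint (fderiv ℝ h x) (lam f h x)
      - adjoint (fderiv ℝ (lam f h) x) (h x) + (2 * β) • adjoint (fderiv ℝ h x) (h x)) x := by
  have hD : HasFDerivAt (flal f h β) (fderiv ℝ f x
      - fderivInnerCLM ℝ (lam f h x, h x) ∘L (fderiv ℝ (lam f h) x).prod (fderiv ℝ h x)
      + β • 2 • innerSL ℝ (h x) ∘L fderiv ℝ h x) x :=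
    (hf.hasFDerivAt.sub (hlam.hasFDerivAt.inner ℝ hh.hasFDerivAt)).add
      (hh.hasFDerivAt.norm_sq.const_mul β)
  rw [hasGradientAt_iff_hasFDerivAt]
  refine hD.congr_fderiv ?_
  ext v
  simp [fderivInnerCLM_apply, adjoint_inner_left, real_inner_comm (h x)]
  ring

end Multipliers

/-- If `Dh(x)` is surjective, `β > β₁(x)`, and `∇g(x) = 0` for Fletcher's augmented
Lagrangian `g`, then `x` is a first-order critical point of `min f s.t. h = 0`:
`h(x) = 0` and `∇f(x) = Dh(x)*[λ(x)]`. -/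
theorem critical_point_of_fletcher_is_critical_point_of_problem
    (f : E → ℝ) (h : E → EuclideanSpace ℝ (Fin m))
    (hf : ContDiff ℝ ∞ f) (hh : ContDiff ℝ ∞ h)
    (x : E) (hsurj : Function.Surjective (fderiv ℝ h x))
    (β : ℝ) (hβ : β > beta1 f h x)
    (hcrit : gradient (flal f h β) x = 0) :
    h x = 0 ∧ gradient f x = ContinuousLinearMap.adjoint (fderiv ℝ h x) (lam f h x) := by
  have hf2 : ContDiff ℝ 2 f := hf.of_le (WithTop.coe_le_coe.mpr le_top)
  have hh2 : ContDiff ℝ 2 h := hh.of_le (WithTop.coe_le_coe.mpr le_top)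
  have hstat := (hasGradientAt_flal f h β (hf2.differentiable two_ne_zero x)
    (hh2.differentiable two_ne_zero x) (differentiableAt_lam f h hf2 hh2 hsurj)).gradient
  rw [hcrit, eq_comm] at hstat
  have hx0 : h x = 0 := by
    by_contra hne
    have : Nontrivial (EuclideanSpace ℝ (Fin m)) := nontrivial_of_ne _ _ hne
    have hσ := sigmaMin_pos (injective_adjoint_of_surjective hsurj)
    rw [beta1, Clam, gt_iff_lt, div_lt_iff₀ (by positivity)] at hβ
    exact hne <| eq_zero_of_sub_adjoint_add_smul_adjoint_eq_zero (sigmaMin_nonneg _)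
      (sigmaMin_mul_norm_le _) (by linarith) (fderiv_adjoint_lam f h hsurj) hstat
  refine ⟨hx0, ?_⟩
  simpa [hx0, sub_eq_zero] using hstat
end
end

section
/- Let x ∈ E with h(x) = 0 and Dh(x) surjective, and let β ≥ 0. Then for every v ∈ ker Dh(x), ⟨v, ∇²g(x)[v]⟩ = ⟨v, ∇²f(x)[v]⟩ − Σ_{i=1}^m λ_i(x)·⟨v, ∇²h_i(x)[v]⟩; i.e., the restriction of ∇²g(x) to ker Dh(x) equals the Riemannian Hessian of f on M at x. Consequently, if ∇²g(x) ⪰ −ε₂·Id on E, then ⟨v, (∇²f(x) − Σᵢ λ_i(x)∇²h_i(x))[v]⟩ ≥ −ε₂‖v‖² for all v ∈ ker Dh(x); and if ∇²g(x) is positive definite, then the Riemannian Hessian of f on M at x is positive definite. -/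
/-!
Expand `g = f - ∑ᵢ λᵢ hᵢ + β ∑ᵢ hᵢ²` in coordinates. By the Leibniz rule,
`D²(p q)[v,v] = p D²q[v,v] + 2 Dp[v] Dq[v] + q D²p[v,v]`, so whenever `q(x) = 0` and
`Dq(x)[v] = 0` only `p(x) D²q(x)[v,v]` survives. At a feasible `x` and `v ∈ ker Dh(x)` this
applies to every `hᵢ`, leaving `λᵢ(x) D²hᵢ(x)[v,v]` from the multiplier terms and nothing
from the penalty. The only analytic input is that `λ` is `C²` near `x`: `Dh(x) Dh(x)*` has kernel
`(range Dh(x))ᗮ = 0`, hence is invertible, and near `x` the multipliers are the inverse of the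
smooth family `Dh Dh*` applied to `Dh ∇f`.
-/

open scoped RealInnerProductSpace ContDiff

noncomputable section

variable {E : Type*} [NormedAddCommGroup E] [InnerProductSpace ℝ E] [FiniteDimensional ℝ E] {m : ℕ}

open Filter Topology
open scoped InnerProduct

section SecondDerivative

variable {𝕜 V W : Type*} [NontriviallyNormedField 𝕜]
  [NormedAddCommGroup V] [NormedSpace 𝕜 V] [NormedAddCommGroup W] [NormedSpace 𝕜 W]
  {n : WithTop ℕ∞} {x : V}

theorem ContDiffAt.eventually_differentiableAt {f : V → W} (hf : ContDiffAt 𝕜 n f x)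
    (hn : 1 ≤ n) : ∀ᶠ y in 𝓝 x, DifferentiableAt 𝕜 f y :=
  ((hf.of_le hn).eventually (by simp)).mono fun _ hy => hy.differentiableAt one_ne_zero

theorem ContDiffAt.differentiableAt_fderiv {f : V → W} (hf : ContDiffAt 𝕜 n f x)
    (hn : 2 ≤ n) : DifferentiableAt 𝕜 (fderiv 𝕜 f) x :=
  (hf.fderiv_right (m := 1) hn).differentiableAt one_ne_zero

theorem iteratedFDeriv_two_mul_apply {p q : V → 𝕜} (hp : ContDiffAt 𝕜 2 p x)
    (hq : ContDiffAt 𝕜 2 q x) (v w : V) :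
    iteratedFDeriv 𝕜 2 (fun y => p y * q y) x ![v, w] =
      p x * iteratedFDeriv 𝕜 2 q x ![v, w] + fderiv 𝕜 p x v * fderiv 𝕜 q x w
        + fderiv 𝕜 q x v * fderiv 𝕜 p x w + q x * iteratedFDeriv 𝕜 2 p x ![v, w] := by
  have hDpq : fderiv 𝕜 (fun y => p y * q y) =ᶠ[𝓝 x]
      fun y => p y • fderiv 𝕜 q y + q y • fderiv 𝕜 p y := by
    filter_upwards [hp.eventually_differentiableAt one_le_two,
      hq.eventually_differentiableAt one_le_two] with y hpy hqy
    exact fderiv_fun_mul hpy hqy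
  have hp1 := hp.differentiableAt two_ne_zero
  have hq1 := hq.differentiableAt two_ne_zero
  have hp2 := hp.differentiableAt_fderiv le_rfl
  have hq2 := hq.differentiableAt_fderiv le_rfl
  simp only [iteratedFDeriv_two_apply, Matrix.cons_val_zero, Matrix.cons_val_one]
  rw [hDpq.fderiv_eq, ((hp1.hasFDerivAt.fun_smul hq2.hasFDerivAt).fun_add
    (hq1.hasFDerivAt.fun_smul hp2.hasFDerivAt)).fderiv]
  simp only [add_apply, smul_apply, ContinuousLinearMap.smulRight_apply, smul_eq_mul]
  ring

theorem iteratedFDeriv_two_mul_apply_of_eq_zero {p q : V → 𝕜} (hp : ContDiffAt 𝕜 2 p x)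
    (hq : ContDiffAt 𝕜 2 q x) {v : V} (hq₀ : q x = 0) (hq₁ : fderiv 𝕜 q x v = 0) :
    iteratedFDeriv 𝕜 2 (fun y => p y * q y) x ![v, v] =
      p x * iteratedFDeriv 𝕜 2 q x ![v, v] := by
  rw [iteratedFDeriv_two_mul_apply hp hq, hq₀, hq₁]
  ring

end SecondDerivative

theorem LinearIsometryEquiv.contDiff_of_conj_real {V W : Type*} [NormedAddCommGroup V]
    [NormedSpace ℝ V] [NormedAddCommGroup W] [NormedSpace ℝ W] {n : WithTop ℕ∞}
    (φ : V ≃ₗᵢ⋆[ℝ] W) : ContDiff ℝ n φ :=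
  (AddMonoidHom.toRealLinearMap (φ : V →+ W) φ.continuous).contDiff

theorem ContinuousLinearMap.isUnit_comp_adjoint_of_surjective {𝕜 V W : Type*} [RCLike 𝕜]
    [NormedAddCommGroup V] [InnerProductSpace 𝕜 V] [CompleteSpace V] [NormedAddCommGroup W]
    [InnerProductSpace 𝕜 W] [CompleteSpace W] [FiniteDimensional 𝕜 W] {T : V →L[𝕜] W}
    (hT : Function.Surjective T) : IsUnit (T ∘L T†) := by
  have hker : (T ∘L T†).ker = ⊥ := by
    rw [ker_self_comp_adjoint, ← orthogonal_range, LinearMap.range_eq_top.mpr hT,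
      Submodule.top_orthogonal_eq_bot]
  rw [isUnit_iff_isUnit_toLinearMap]
  exact (LinearMap.isUnit_iff_ker_eq_bot _).mpr hker

theorem ContDiffAt.invFun_apply {𝕜 V W : Type*} [NontriviallyNormedField 𝕜]
    [NormedAddCommGroup V] [NormedSpace 𝕜 V] [NormedAddCommGroup W] [NormedSpace 𝕜 W]
    [CompleteSpace W] {n : WithTop ℕ∞} {x : V} {A : V → W →L[𝕜] W} {b : V → W}
    (hA : ContDiffAt 𝕜 n A x) (hb : ContDiffAt 𝕜 n b x) (hAx : IsUnit (A x)) :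
    ContDiffAt 𝕜 n (fun y => Function.invFun (A y) (b y)) x := by
  have hinverse : ContDiffAt 𝕜 n Ring.inverse (A x) := by
    rw [← hAx.unit_spec]
    exact contDiffAt_ringInverse 𝕜 hAx.unit
  refine ((hinverse.comp x hA).clm_apply hb).congr_of_eventuallyEq ?_
  filter_upwards [hA.continuousAt.eventually (Units.isOpen.mem_nhds hAx)] with y hy
  have hbij := ContinuousLinearMap.isUnit_iff_bijective.mp hy
  apply hbij.injective
  rw [Function.invFun_eq (hbij.surjective _)]
  exact congr($(Ring.mul_inverse_cancel _ hy) (b y)).symm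

theorem fderiv_euclideanSpace_apply {𝕜 V ι : Type*} [RCLike 𝕜] [NormedAddCommGroup V]
    [NormedSpace 𝕜 V] [Fintype ι] {g : V → EuclideanSpace 𝕜 ι} {x : V}
    (hg : DifferentiableAt 𝕜 g x) (i : ι) (v : V) :
    fderiv 𝕜 (fun y => g y i) x v = fderiv 𝕜 g x v i := by
  exact DFunLike.congr_fun ((PiLp.hasFDerivAt_apply 2 (g x) i).comp x hg.hasFDerivAt).fderiv v

section Fletcher

variable {f : E → ℝ} {h : E → EuclideanSpace ℝ (Fin m)}

theorem contDiffAt_lam {n : WithTop ℕ∞} (hf : ContDiff ℝ (n + 1) f)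
    (hh : ContDiff ℝ (n + 1) h) {x : E} (hsurj : Function.Surjective (fderiv ℝ h x)) :
    ContDiffAt ℝ n (lam f h) x := by
  have hDh : ContDiff ℝ n (fderiv ℝ h) := hh.fderiv_right le_rfl
  have hadj : ContDiff ℝ n fun y => (fderiv ℝ h y)† :=
    (ContinuousLinearMap.adjoint (𝕜 := ℝ) (E := E) (F := EuclideanSpace ℝ (Fin m))
      ).contDiff_of_conj_real.comp hDh
  have hgrad : ContDiff ℝ n (gradient f) :=
    (InnerProductSpace.toDual ℝ E).symm.contDiff_of_conj_real.comp (hf.fderiv_right le_rfl)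
  exact ContDiffAt.invFun_apply (A := fun y => fderiv ℝ h y ∘L (fderiv ℝ h y)†)
    (hDh.clm_comp hadj).contDiffAt (hDh.clm_apply hgrad).contDiffAt
    (ContinuousLinearMap.isUnit_comp_adjoint_of_surjective hsurj)

theorem flal_eq_sum (β : ℝ) :
    flal f h β = fun y => f y - ∑ i, lam f h y i * h y i + β • ∑ i, h y i * h y i := by
  funext y
  rw [flal, real_inner_comm, PiLp.inner_apply, EuclideanSpace.real_norm_sq_eq]
  simp only [RCLike.inner_apply, conj_trivial, sq, smul_eq_mul]

theorem hessian_flal_apply_of_mem_ker (hf : ContDiff ℝ 3 f) (hh : ContDiff ℝ 3 h) {x : E}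
    (hfeas : h x = 0) (hsurj : Function.Surjective (fderiv ℝ h x)) (β : ℝ) {v : E}
    (hv : fderiv ℝ h x v = 0) :
    iteratedFDeriv ℝ 2 (flal f h β) x ![v, v] =
      iteratedFDeriv ℝ 2 f x ![v, v]
        - ∑ i, lam f h x i * iteratedFDeriv ℝ 2 (fun y => h y i) x ![v, v] := by
  have hlam : ∀ i, ContDiffAt ℝ 2 (fun y => lam f h y i) x :=
    (contDiffAt_piLp _).1 (contDiffAt_lam (n := 2) hf hh hsurj)
  have hhi : ∀ i, ContDiffAt ℝ 2 (fun y => h y i) x := fun i =>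
    ((contDiff_piLp _).1 (hh.of_le (by norm_num)) i).contDiffAt
  have hhi₀ : ∀ i, h x i = 0 := by simp [hfeas]
  have hhi₁ : ∀ i, fderiv ℝ (fun y => h y i) x v = 0 := fun i => by
    rw [fderiv_euclideanSpace_apply (hh.differentiable (by norm_num) x), hv, PiLp.zero_apply]
  have hfx : ContDiffAt ℝ 2 f x := (hf.of_le (by norm_num)).contDiffAt
  have hlamh : ∀ i ∈ Finset.univ, ContDiffAt ℝ 2 (fun y => lam f h y i * h y i) x :=
    fun i _ => (hlam i).mul (hhi i)
  have hhh : ∀ i ∈ Finset.univ, ContDiffAt ℝ 2 (fun y => h y i * h y i) x :=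
    fun i _ => (hhi i).mul (hhi i)
  rw [flal_eq_sum,
    fun_iteratedFDeriv_add_apply (hfx.sub (.sum hlamh)) ((ContDiffAt.sum hhh).const_smul β),
    fun_iteratedFDeriv_sub_apply hfx (.sum hlamh), iteratedFDeriv_const_smul_apply' (.sum hhh),
    iteratedFDeriv_fun_sum_apply hlamh, iteratedFDeriv_fun_sum_apply hhh]
  simp only [add_apply, sub_apply, smul_apply, sum_apply,
    iteratedFDeriv_two_mul_apply_of_eq_zero (hlam _) (hhi _) (hhi₀ _) (hhi₁ _),
    iteratedFDeriv_two_mul_apply_of_eq_zero (hhi _) (hhi _) (hhi₀ _) (hhi₁ _), hhi₀, zero_mul,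
    Finset.sum_const_zero, smul_zero, add_zero]

end Fletcher

theorem fletcher_hessian_restricted_to_tangent_space_general
    (f : E → ℝ) (h : E → EuclideanSpace ℝ (Fin m))
    (hf : ContDiff ℝ ∞ f) (hh : ContDiff ℝ ∞ h)
    (x : E) (hfeas : h x = 0) (hsurj : Function.Surjective (fderiv ℝ h x))
    (β : ℝ) :
    (∀ v ∈ LinearMap.ker (fderiv ℝ h x : E →ₗ[ℝ] EuclideanSpace ℝ (Fin m)),
      iteratedFDeriv ℝ 2 (flal f h β) x ![v, v] =
        iteratedFDeriv ℝ 2 f x ![v, v]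
          - ∑ i, lam f h x i * iteratedFDeriv ℝ 2 (fun y => h y i) x ![v, v]) ∧
    (∀ ε₂ : ℝ,
      (∀ v : E, iteratedFDeriv ℝ 2 (flal f h β) x ![v, v] ≥ -ε₂ * ‖v‖ ^ 2) →
      ∀ v ∈ LinearMap.ker (fderiv ℝ h x : E →ₗ[ℝ] EuclideanSpace ℝ (Fin m)),
        iteratedFDeriv ℝ 2 f x ![v, v]
          - ∑ i, lam f h x i * iteratedFDeriv ℝ 2 (fun y => h y i) x ![v, v]
          ≥ -ε₂ * ‖v‖ ^ 2) ∧
    ((∀ v : E, v ≠ 0 → iteratedFDeriv ℝ 2 (flal f h β) x ![v, v] > 0) →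
      ∀ v ∈ LinearMap.ker (fderiv ℝ h x : E →ₗ[ℝ] EuclideanSpace ℝ (Fin m)), v ≠ 0 →
        iteratedFDeriv ℝ 2 f x ![v, v]
          - ∑ i, lam f h x i * iteratedFDeriv ℝ 2 (fun y => h y i) x ![v, v] > 0) := by
  have h3 : (3 : WithTop ℕ∞) ≤ ∞ := ENat.LEInfty.out
  have hessian_eq :=
    fun v (hv : v ∈ LinearMap.ker (fderiv ℝ h x : E →ₗ[ℝ] EuclideanSpace ℝ (Fin m))) =>
    hessian_flal_apply_of_mem_ker (hf.of_le h3) (hh.of_le h3) hfeas hsurj β hv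
  refine ⟨hessian_eq, fun ε₂ hbound v hv => ?_, fun hpos v hv hv₀ => ?_⟩
  · exact hessian_eq v hv ▸ hbound v
  · exact hessian_eq v hv ▸ hpos v hv₀

/-- At a feasible point `x` with `Dh(x)` surjective, the Hessian of Fletcher's augmented
Lagrangian restricted to `ker Dh(x)` equals the Riemannian Hessian of `f` on `M`:
`⟨v, ∇²g(x)[v]⟩ = ⟨v, ∇²f(x)[v]⟩ − Σᵢ λᵢ(x)⟨v, ∇²hᵢ(x)[v]⟩` for `v ∈ ker Dh(x)`.
Consequently `∇²g(x) ⪰ −ε₂·Id` implies the Riemannian Hessian is `⪰ −ε₂·Id` on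
`ker Dh(x)`, and `∇²g(x) ≻ 0` implies the Riemannian Hessian is positive definite. -/
theorem fletcher_hessian_restricted_to_tangent_space
    (f : E → ℝ) (h : E → EuclideanSpace ℝ (Fin m))
    (hf : ContDiff ℝ ∞ f) (hh : ContDiff ℝ ∞ h)
    (x : E) (hfeas : h x = 0) (hsurj : Function.Surjective (fderiv ℝ h x))
    (β : ℝ) (hβ : 0 ≤ β) :
    (∀ v ∈ LinearMap.ker (fderiv ℝ h x : E →ₗ[ℝ] EuclideanSpace ℝ (Fin m)),
      iteratedFDeriv ℝ 2 (flal f h β) x ![v, v] =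
        iteratedFDeriv ℝ 2 f x ![v, v]
          - ∑ i, lam f h x i * iteratedFDeriv ℝ 2 (fun y => h y i) x ![v, v]) ∧
    (∀ ε₂ : ℝ,
      (∀ v : E, iteratedFDeriv ℝ 2 (flal f h β) x ![v, v] ≥ -ε₂ * ‖v‖ ^ 2) →
      ∀ v ∈ LinearMap.ker (fderiv ℝ h x : E →ₗ[ℝ] EuclideanSpace ℝ (Fin m)),
        iteratedFDeriv ℝ 2 f x ![v, v]
          - ∑ i, lam f h x i * iteratedFDeriv ℝ 2 (fun y => h y i) x ![v, v]
          ≥ -ε₂ * ‖v‖ ^ 2) ∧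
    ((∀ v : E, v ≠ 0 → iteratedFDeriv ℝ 2 (flal f h β) x ![v, v] > 0) →
      ∀ v ∈ LinearMap.ker (fderiv ℝ h x : E →ₗ[ℝ] EuclideanSpace ℝ (Fin m)), v ≠ 0 →
        iteratedFDeriv ℝ 2 f x ![v, v]
          - ∑ i, lam f h x i * iteratedFDeriv ℝ 2 (fun y => h y i) x ![v, v] > 0) :=
  fletcher_hessian_restricted_to_tangent_space_general f h hf hh x hfeas hsurj β
end
end

section
/- Assume (A1): σ_min(Dh(x)) ≥ σ̲ > 0 for all x ∈ C := {x : ‖h(x)‖ ≤ R}, R, σ̲ > 0, and (A3): ‖h(x+v) − h(x) − Dh(x)[v]‖ ≤ C_h‖v‖² for all x ∈ C, v ∈ E, with C_h > 0. Let x ∈ C and β > β₁(x) := σ₁(Dh(x))·C_λ(x)/(2σ_min(Dh(x))²). Then for every t ∈ [0, t₁(x)], the point x − t∇g(x) lies in C, where t₁(x) := min( √(R/(2C_h)) / ‖∇g(x)‖ , (2β·σ_min(Dh(x))² − σ₁(Dh(x))·C_λ(x))·R / (2C_h‖∇g(x)‖²) , 1/(2β‖Dh(x)‖²) ). -/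
open scoped RealInnerProductSpace ContDiff

noncomputable section

variable {E : Type*} [NormedAddCommGroup E] [InnerProductSpace ℝ E] [FiniteDimensional ℝ E] {m : ℕ}

open Classical in
/-- The step-size bound `t₁(x)` of Proposition 3.2 (gradient steps stay in `C`); when
`∇g(x) = 0` the first two entries of the minimum are `+∞`, so only the third remains. -/
def t1 (f : E → ℝ) (h : E → EuclideanSpace ℝ (Fin m)) (β R Ch : ℝ) (x : E) : ℝ :=
  if gradient (flal f h β) x = 0 then 1 / (2 * β * ‖fderiv ℝ h x‖ ^ 2)
  else
    min (Real.sqrt (R / (2 * Ch)) / ‖gradient (flal f h β) x‖)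
      (min ((2 * β * sigmaMin (fderiv ℝ h x) ^ 2 - ‖fderiv ℝ h x‖ * Clam f h x) * R /
          (2 * Ch * ‖gradient (flal f h β) x‖ ^ 2))
        (1 / (2 * β * ‖fderiv ℝ h x‖ ^ 2)))

/-- The step-size bound `t₂(x)` of Proposition 3.4 (eigensteps stay in `C`). -/
def t2 (h : E → EuclideanSpace ℝ (Fin m)) (R Ch : ℝ) (x : E) : ℝ :=
  (-‖fderiv ℝ h x‖ + Real.sqrt (‖fderiv ℝ h x‖ ^ 2 + 2 * Ch * R)) / (2 * Ch)

/-- `L_g = max_{y ∈ C} ‖∇²g(y)‖`. -/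
def Lg (f : E → ℝ) (h : E → EuclideanSpace ℝ (Fin m)) (β R : ℝ) : ℝ :=
  sSup ((fun y => ‖fderiv ℝ (gradient (flal f h β)) y‖) '' {y : E | ‖h y‖ ≤ R})

/-- `M_g = max_{y ∈ C} ‖∇³g(y)‖`. -/
def Mg (f : E → ℝ) (h : E → EuclideanSpace ℝ (Fin m)) (β R : ℝ) : ℝ :=
  sSup ((fun y => ‖iteratedFDeriv ℝ 3 (flal f h β) y‖) '' {y : E | ‖h y‖ ≤ R})

/-- helper: adjoint as a continuous linear map (real case). -/
def adjCLM (E F : Type*) [NormedAddCommGroup E] [InnerProductSpace ℝ E] [FiniteDimensional ℝ E]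
    [NormedAddCommGroup F] [InnerProductSpace ℝ F] [FiniteDimensional ℝ F] :
    (E →L[ℝ] F) →L[ℝ] (F →L[ℝ] E) :=
  LinearMap.toContinuousLinearMap
  { toFun := fun A => ContinuousLinearMap.adjoint A
    map_add' := fun a b => map_add _ a b
    map_smul' := fun r a => by
      simp [LinearIsometryEquiv.map_smulₛₗ, starRingEnd_apply] }

/-- helper: `toDual.symm` as a continuous linear map (real case). -/
def dualCLM (E : Type*) [NormedAddCommGroup E] [InnerProductSpace ℝ E] [FiniteDimensional ℝ E] :
    (E →L[ℝ] ℝ) →L[ℝ] E :=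
  LinearMap.toContinuousLinearMap
  { toFun := fun d => (InnerProductSpace.toDual ℝ E).symm d
    map_add' := fun a b => map_add _ a b
    map_smul' := fun r a => by
      simp [LinearIsometryEquiv.map_smulₛₗ, starRingEnd_apply] }

lemma psd_contraction {K E' : Type*} [NormedAddCommGroup K] [InnerProductSpace ℝ K]
    [NormedAddCommGroup E'] [InnerProductSpace ℝ E'] [CompleteSpace K] [CompleteSpace E']
    (B : K →L[ℝ] E') (c σ : ℝ) (hc : 0 ≤ c) (hσ : 0 ≤ σ) (hM : 0 ≤ 1 - c * σ ^ 2)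
    (hlow : ∀ w, σ * ‖w‖ ≤ ‖B w‖) (hup : ∀ w : K, c * ‖B w‖ ^ 2 ≤ ‖w‖ ^ 2) (z : K) :
    ‖z - c • (ContinuousLinearMap.adjoint B) (B z)‖ ≤ (1 - c * σ ^ 2) * ‖z‖ := by
  set S : K → K := fun w => w - c • (ContinuousLinearMap.adjoint B) (B w) with hS
  have hSa : ∀ a b : K, ⟪S a, b⟫ = ⟪a, b⟫ - c * ⟪B a, B b⟫ := by
    intro a b
    simp [hS, inner_sub_left, real_inner_smul_left, ContinuousLinearMap.adjoint_inner_left]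
  have hQ : ∀ a, ⟪S a, a⟫ = ‖a‖ ^ 2 - c * ‖B a‖ ^ 2 := by
    intro a; rw [hSa, real_inner_self_eq_norm_sq, real_inner_self_eq_norm_sq]
  have hQ0 : ∀ a, 0 ≤ ⟪S a, a⟫ := by intro a; rw [hQ]; linarith [hup a]
  have hQle : ∀ a, ⟪S a, a⟫ ≤ (1 - c * σ ^ 2) * ‖a‖ ^ 2 := by
    intro a; rw [hQ]
    have h1 : (σ * ‖a‖) ^ 2 ≤ ‖B a‖ ^ 2 := by
      have := hlow a
      nlinarith [mul_nonneg hσ (norm_nonneg a)]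
    nlinarith
  have hCS : ∀ a b : K, ⟪S a, b⟫ ^ 2 ≤ ⟪S a, a⟫ * ⟪S b, b⟫ := by
    intro a b
    have key : ∀ t : ℝ, 0 ≤ ⟪S b, b⟫ * (t * t) + (2 * ⟪S a, b⟫) * t + ⟪S a, a⟫ := by
      intro t
      have h0 := hQ0 (a + t • b)
      have e1 : ⟪S (a + t • b), a + t • b⟫
          = ⟪S b, b⟫ * (t * t) + (2 * ⟪S a, b⟫) * t + ⟪S a, a⟫ := by
        rw [hSa, hSa, hSa, hSa]
        have e2 : ‖a + t • b‖ ^ 2 = ‖a‖ ^2 + 2 * (t * ⟪a, b⟫) + t^2 * ‖b‖^2 := by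
          rw [norm_add_sq_real, real_inner_smul_right, norm_smul]
          simp [Real.norm_eq_abs, mul_pow, sq_abs]
        have e3 : ‖B (a + t • b)‖ ^ 2 = ‖B a‖^2 + 2 * (t * ⟪B a, B b⟫) + t^2 * ‖B b‖^2 := by
          rw [map_add, map_smul, norm_add_sq_real, real_inner_smul_right, norm_smul]
          simp [Real.norm_eq_abs, mul_pow, sq_abs]
        rw [real_inner_add_add_self, map_add, map_smul, real_inner_add_add_self]
        simp only [real_inner_smul_left, real_inner_smul_right]
        rw [real_inner_self_eq_norm_sq, real_inner_self_eq_norm_sq,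
            real_inner_self_eq_norm_sq, real_inner_self_eq_norm_sq]
        ring
      rw [e1] at h0; exact h0
    have hd := discrim_le_zero key
    rw [discrim] at hd
    nlinarith [hd]
  show ‖S z‖ ≤ (1 - c * σ ^ 2) * ‖z‖
  rcases eq_or_lt_of_le (norm_nonneg (S z)) with hn | hn
  · rw [← hn]; positivity
  · have h1 := hCS z (S z)
    have h2 : ⟪S z, S z⟫ = ‖S z‖ ^ 2 := real_inner_self_eq_norm_sq _
    have hq1 := hQle z
    have hq2 := hQle (S z)
    have hq3 := hQ0 z
    have hq4 := hQ0 (S z)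
    have hub : ⟪S z, z⟫ * ⟪S (S z), S z⟫
        ≤ ((1 - c * σ ^ 2) * ‖z‖ ^ 2) * ((1 - c * σ ^ 2) * ‖S z‖ ^ 2) :=
      mul_le_mul hq1 hq2 hq4 (by positivity)
    rw [h2] at h1
    have hm : 0 ≤ (1 - c * σ ^ 2) * ‖z‖ := mul_nonneg hM (norm_nonneg z)
    have hring : ((1 - c * σ ^ 2) * ‖z‖ ^ 2) * ((1 - c * σ ^ 2) * ‖S z‖ ^ 2)
        = ((1 - c * σ ^ 2) * ‖z‖) ^ 2 * ‖S z‖ ^ 2 := by ring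
    have h7 : ‖S z‖ ^ 2 * ‖S z‖ ^ 2 ≤ ((1 - c * σ ^ 2) * ‖z‖) ^ 2 * ‖S z‖ ^ 2 := by
      nlinarith [h1, hub]
    have h8 : ‖S z‖ ^ 2 ≤ ((1 - c * σ ^ 2) * ‖z‖) ^ 2 :=
      le_of_mul_le_mul_right h7 (by positivity)
    exact (pow_le_pow_iff_left₀ (norm_nonneg _) hm two_ne_zero).mp h8

set_option maxHeartbeats 2000000 in
/-- Gradient steps stay in the region `C`: under (A1) and (A3), if `x ∈ C` and
`β > β₁(x)` then `x − t∇g(x) ∈ C` for all `t ∈ [0, t₁(x)]`. -/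
theorem gradient_step_stays_in_region
    (f : E → ℝ) (h : E → EuclideanSpace ℝ (Fin m))
    (hf : ContDiff ℝ ∞ f) (hh : ContDiff ℝ ∞ h)
    (R σl Ch : ℝ) (hR : 0 < R) (hσ : 0 < σl) (hCh : 0 < Ch)
    (hA1 : ∀ y : E, ‖h y‖ ≤ R → sigmaMin (fderiv ℝ h y) ≥ σl)
    (hA3 : ∀ y : E, ‖h y‖ ≤ R → ∀ v : E,
      ‖h (y + v) - h y - fderiv ℝ h y v‖ ≤ Ch * ‖v‖ ^ 2)
    (x : E) (hx : ‖h x‖ ≤ R)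
    (β : ℝ) (hβ : β > beta1 f h x) :
    ∀ t ∈ Set.Icc (0 : ℝ) (t1 f h β R Ch x),
      ‖h (x - t • gradient (flal f h β) x)‖ ≤ R := by
  intro t ht
  obtain ⟨ht0, htle⟩ := ht
  rcases subsingleton_or_nontrivial (EuclideanSpace ℝ (Fin m)) with hK | hK
  · have h0 : h (x - t • gradient (flal f h β) x) = 0 := Subsingleton.elim _ _
    rw [h0, norm_zero]; exact hR.le
  by_cases hu0 : gradient (flal f h β) x = 0
  · simp only [hu0, smul_zero, sub_zero]; exact hx
  unfold t1 at htle
  rw [if_neg hu0, le_min_iff, le_min_iff] at htle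
  obtain ⟨ht1, ht2, ht3⟩ := htle
  -- abbreviations
  set A : E →L[ℝ] EuclideanSpace ℝ (Fin m) := fderiv ℝ h x with hAdef
  set A' : EuclideanSpace ℝ (Fin m) →L[ℝ] E := ContinuousLinearMap.adjoint A with hA'def
  set z : EuclideanSpace ℝ (Fin m) := h x with hzdef
  set u : E := gradient (flal f h β) x with hudef
  set σ : ℝ := sigmaMin A with hσdef
  set Cl : ℝ := Clam f h x with hCldef
  -- basic facts about σ
  have hbdd : BddBelow ((fun y => ‖A' y‖) '' {y : EuclideanSpace ℝ (Fin m) | ‖y‖ = 1}) := by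
    refine ⟨0, ?_⟩
    rintro r ⟨y, -, rfl⟩
    exact norm_nonneg _
  have hAlow : ∀ w, σ * ‖w‖ ≤ ‖A' w‖ := by
    intro w
    rcases eq_or_ne w 0 with rfl | hw
    · simp
    · have hw' : ‖w‖ ≠ 0 := norm_ne_zero_iff.mpr hw
      have hmem : ‖A' (‖w‖⁻¹ • w)‖ ∈
          ((fun y => ‖A' y‖) '' {y : EuclideanSpace ℝ (Fin m) | ‖y‖ = 1}) := by
        refine Set.mem_image_of_mem _ ?_
        simp only [Set.mem_setOf_eq, norm_smul, norm_inv, norm_norm]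
        exact inv_mul_cancel₀ hw'
      have h1 : σ ≤ ‖A' (‖w‖⁻¹ • w)‖ := csInf_le hbdd hmem
      rw [map_smul, norm_smul, norm_inv, norm_norm] at h1
      rw [mul_comm]
      calc ‖w‖ * σ ≤ ‖w‖ * (‖w‖⁻¹ * ‖A' w‖) := by
            exact mul_le_mul_of_nonneg_left h1 (norm_nonneg w)
        _ = ‖A' w‖ := by field_simp
  have hσl : σl ≤ σ := hA1 x hx
  have hσpos : 0 < σ := lt_of_lt_of_le hσ hσl
  have hAA' : ‖A'‖ = ‖A‖ := ContinuousLinearMap.adjoint.norm_map A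
  have hσs1 : σ ≤ ‖A‖ := by
    obtain ⟨w0, hw0⟩ := exists_ne (0 : EuclideanSpace ℝ (Fin m))
    have hw0' : 0 < ‖w0‖ := norm_pos_iff.mpr hw0
    have h1 := hAlow w0
    have h2 : ‖A' w0‖ ≤ ‖A‖ * ‖w0‖ := by
      calc ‖A' w0‖ ≤ ‖A'‖ * ‖w0‖ := A'.le_opNorm w0
        _ = ‖A‖ * ‖w0‖ := by rw [hAA']
    have := h1.trans h2
    exact le_of_mul_le_mul_right (by linarith [this]) hw0'
  have hs1pos : 0 < ‖A‖ := lt_of_lt_of_le hσpos hσs1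
  have hClnn : 0 ≤ Cl := norm_nonneg _
  have hβ1nn : 0 ≤ beta1 f h x := by
    apply div_nonneg (mul_nonneg (norm_nonneg _) hClnn)
    positivity
  have hβpos : 0 < β := lt_of_le_of_lt hβ1nn hβ
  have hKc : ‖A‖ * Cl < 2 * β * σ ^ 2 := by
    have hb1 : beta1 f h x = ‖A‖ * Cl / (2 * σ ^ 2) := rfl
    rw [hb1] at hβ
    have := (div_lt_iff₀ (by positivity)).mp hβ
    linarith
  -- differentiability basics
  have hdh : Differentiable ℝ h := hh.differentiable (by simp)
  have hdf : Differentiable ℝ f := hf.differentiable (by simp)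
  have hfderivh : Differentiable ℝ (fderiv ℝ h) :=
    (ContDiff.fderiv_right (m := ∞) hh (le_of_eq rfl)).differentiable (by simp)
  have hgradf : Differentiable ℝ (gradient f) := by
    have h1 : gradient f = fun y => dualCLM E (fderiv ℝ f y) := rfl
    rw [h1]
    exact (dualCLM E).differentiable.comp
      ((ContDiff.fderiv_right (m := ∞) hf (le_of_eq rfl)).differentiable (by simp))
  have hwvec : Differentiable ℝ (fun y => fderiv ℝ h y (gradient f y)) :=
    hfderivh.clm_apply hgradf
  -- the Gram map
  set Fm : E → (EuclideanSpace ℝ (Fin m) →L[ℝ] EuclideanSpace ℝ (Fin m)) :=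
    fun y => (fderiv ℝ h y).comp (ContinuousLinearMap.adjoint (fderiv ℝ h y)) with hFmdef
  have hFmd : Differentiable ℝ Fm := by
    have hadj : Differentiable ℝ (fun y => ContinuousLinearMap.adjoint (fderiv ℝ h y)) :=
      (adjCLM E (EuclideanSpace ℝ (Fin m))).differentiable.comp hfderivh
    exact hfderivh.clm_comp hadj
  have hFmx : ∀ w, Fm x w = A (A' w) := fun w => rfl
  have hTinj : Function.Injective (Fm x) := by
    rw [injective_iff_map_eq_zero]
    intro w hw
    have h1 : ⟪A' w, A' w⟫ = 0 := by
      rw [ContinuousLinearMap.adjoint_inner_left]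
      rw [← hFmx w, hw]
      simp
    have h2 : A' w = 0 := inner_self_eq_zero.mp h1
    have h3 := hAlow w
    rw [h2, norm_zero] at h3
    have h4 : ‖w‖ ≤ 0 := by nlinarith [norm_nonneg w]
    exact norm_le_zero_iff.mp h4
  have hTsurj : Function.Surjective (Fm x) := by
    have := LinearMap.injective_iff_surjective
      (f := ((Fm x) : EuclideanSpace ℝ (Fin m) →ₗ[ℝ] EuclideanSpace ℝ (Fin m)))
    exact this.mp hTinj
  have hlamx : A (A' (lam f h x)) = A (gradient f x) := by
    have hs : ∃ w, (fun y => fderiv ℝ h x (ContinuousLinearMap.adjoint (fderiv ℝ h x) y)) w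
        = fderiv ℝ h x (gradient f x) := hTsurj (fderiv ℝ h x (gradient f x))
    exact Function.invFun_eq hs
  -- lam is differentiable at x
  have hUnit : IsUnit (Fm x) := by
    have hbij : Function.Bijective ((Fm x) : EuclideanSpace ℝ (Fin m) →ₗ[ℝ] EuclideanSpace ℝ (Fin m)) := ⟨hTinj, hTsurj⟩
    let e := (LinearEquiv.ofBijective ((Fm x) : EuclideanSpace ℝ (Fin m) →ₗ[ℝ] EuclideanSpace ℝ (Fin m)) hbij).toContinuousLinearEquiv
    exact ⟨e.toUnit, by ext w; rfl⟩
  have hnhds : ∀ᶠ y in nhds x, IsUnit (Fm y) :=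
    (hFmd x).continuousAt.preimage_mem_nhds (Units.isOpen.mem_nhds hUnit)
  have heq : lam f h =ᶠ[nhds x]
      fun y => Ring.inverse (Fm y) (fderiv ℝ h y (gradient f y)) := by
    filter_upwards [hnhds] with y hy
    obtain ⟨v, hv⟩ := hy
    have happ : ∀ w, Fm y w = fderiv ℝ h y (ContinuousLinearMap.adjoint (fderiv ℝ h y) w) :=
      fun w => rfl
    have hvinv : ∀ b, Fm y ((↑v⁻¹ : EuclideanSpace ℝ (Fin m) →L[ℝ] EuclideanSpace ℝ (Fin m)) b) = b := by
      intro b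
      rw [← hv, ← ContinuousLinearMap.mul_apply, ← Units.val_mul, mul_inv_cancel,
        Units.val_one, ContinuousLinearMap.one_apply]
    have hysurj : Function.Surjective
        (fun w => fderiv ℝ h y (ContinuousLinearMap.adjoint (fderiv ℝ h y) w)) := by
      intro b
      refine ⟨(↑v⁻¹ : EuclideanSpace ℝ (Fin m) →L[ℝ] EuclideanSpace ℝ (Fin m)) b, ?_⟩
      exact hvinv b
    have hvinv' : ∀ b, (↑v⁻¹ : EuclideanSpace ℝ (Fin m) →L[ℝ] EuclideanSpace ℝ (Fin m)) ((↑v : EuclideanSpace ℝ (Fin m) →L[ℝ] EuclideanSpace ℝ (Fin m)) b) = b := by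
      intro b
      rw [← ContinuousLinearMap.mul_apply, ← Units.val_mul, inv_mul_cancel,
        Units.val_one, ContinuousLinearMap.one_apply]
    have hyinj : Function.Injective
        (fun w => fderiv ℝ h y (ContinuousLinearMap.adjoint (fderiv ℝ h y) w)) := by
      intro a b hab
      have h1 : Fm y a = Fm y b := hab
      have h2 : (↑v : EuclideanSpace ℝ (Fin m) →L[ℝ] EuclideanSpace ℝ (Fin m)) a = (↑v : EuclideanSpace ℝ (Fin m) →L[ℝ] EuclideanSpace ℝ (Fin m)) b := by rw [hv]; exact h1
      calc a = (↑v⁻¹ : EuclideanSpace ℝ (Fin m) →L[ℝ] EuclideanSpace ℝ (Fin m)) ((↑v : EuclideanSpace ℝ (Fin m) →L[ℝ] EuclideanSpace ℝ (Fin m)) a) := (hvinv' a).symm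
        _ = (↑v⁻¹ : EuclideanSpace ℝ (Fin m) →L[ℝ] EuclideanSpace ℝ (Fin m)) ((↑v : EuclideanSpace ℝ (Fin m) →L[ℝ] EuclideanSpace ℝ (Fin m)) b) := by rw [h2]
        _ = b := hvinv' b
    have hinvfun : (fun w => fderiv ℝ h y (ContinuousLinearMap.adjoint (fderiv ℝ h y) w))
        (lam f h y) = fderiv ℝ h y (gradient f y) :=
      Function.invFun_eq (hysurj _)
    have hrinv : Ring.inverse (Fm y) = (↑v⁻¹ : EuclideanSpace ℝ (Fin m) →L[ℝ] EuclideanSpace ℝ (Fin m)) := by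
      rw [← hv, Ring.inverse_unit]
    apply hyinj
    rw [hinvfun, hrinv]
    exact (hvinv _).symm
  have hlamdiff : DifferentiableAt ℝ (lam f h) x := by
    have hrhs : DifferentiableAt ℝ
        (fun y => Ring.inverse (Fm y) (fderiv ℝ h y (gradient f y))) x :=
      DifferentiableAt.clm_apply ((hFmd x).inverse hUnit) (hwvec x)
    exact (heq.differentiableAt_iff).mpr hrhs
  -- the gradient formula
  set lx : EuclideanSpace ℝ (Fin m) := lam f h x with hlxdef
  set L : E →L[ℝ] EuclideanSpace ℝ (Fin m) := fderiv ℝ (lam f h) x with hLdef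
  have hflal : flal f h β = fun y => f y - ⟪lam f h y, h y⟫ + β * ⟪h y, h y⟫ := by
    funext y
    rw [flal, real_inner_self_eq_norm_sq]
  have hp : DifferentiableAt ℝ (fun y => ⟪lam f h y, h y⟫) x := hlamdiff.inner ℝ (hdh x)
  have hq : DifferentiableAt ℝ (fun y => ⟪h y, h y⟫) x := (hdh x).inner ℝ (hdh x)
  set G : E := gradient f x - (ContinuousLinearMap.adjoint L) z - A' lx + (2 * β) • A' z
    with hGdef
  have huG : u = G := by
    apply ext_inner_right ℝ
    intro v
    have h1 : ⟪u, v⟫ = fderiv ℝ (flal f h β) x v := InnerProductSpace.toDual_symm_apply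
    have H : HasFDerivAt (flal f h β)
        (fderiv ℝ f x - fderiv ℝ (fun y => ⟪lam f h y, h y⟫) x
          + β • fderiv ℝ (fun y => ⟪h y, h y⟫) x) x := by
      rw [hflal]
      exact (((hdf x).hasFDerivAt.sub hp.hasFDerivAt).add (hq.hasFDerivAt.const_mul β))
    have h2 : fderiv ℝ (flal f h β) x v
        = fderiv ℝ f x v - fderiv ℝ (fun y => ⟪lam f h y, h y⟫) x v
          + β * fderiv ℝ (fun y => ⟪h y, h y⟫) x v := by
      rw [H.fderiv]
      simp [ContinuousLinearMap.add_apply, ContinuousLinearMap.sub_apply]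
    have h3 : fderiv ℝ (fun y => ⟪lam f h y, h y⟫) x v = ⟪lx, A v⟫ + ⟪L v, z⟫ :=
      fderiv_inner_apply ℝ hlamdiff (hdh x) v
    have h4 : fderiv ℝ (fun y => ⟪h y, h y⟫) x v = ⟪z, A v⟫ + ⟪A v, z⟫ :=
      fderiv_inner_apply ℝ (hdh x) (hdh x) v
    have h5 : fderiv ℝ f x v = ⟪gradient f x, v⟫ :=
      (InnerProductSpace.toDual_symm_apply).symm
    rw [h1, h2, h3, h4, h5, hGdef]
    simp only [inner_sub_left, inner_add_left, real_inner_smul_left,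
      ContinuousLinearMap.adjoint_inner_left]
    have e1 : ⟪A' z, v⟫ = ⟪z, A v⟫ := ContinuousLinearMap.adjoint_inner_left A v z
    have e2 : ⟪A' lx, v⟫ = ⟪lx, A v⟫ := ContinuousLinearMap.adjoint_inner_left A v lx
    have e3 : ⟪A v, z⟫ = ⟪z, A v⟫ := real_inner_comm _ _
    have e4 : ⟪L v, z⟫ = ⟪z, L v⟫ := real_inner_comm _ _
    rw [e1, e2, e3, e4]
    ring
  have hAu : A u = (2 * β) • (A (A' z)) - A ((ContinuousLinearMap.adjoint L) z) := by
    rw [huG, hGdef]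
    simp only [map_add, map_sub, map_smul]
    rw [hlamx]
    abel
  -- the A3 estimate
  have hA3' := hA3 x hx (-(t • u))
  have hxmt : x + -(t • u) = x - t • u := by rw [sub_eq_add_neg]
  rw [hxmt] at hA3'
  have hAneg : fderiv ℝ h x (-(t • u)) = -(t • A u) := by simp [hAdef]
  rw [hAneg] at hA3'
  have hnrm : ‖-(t • u)‖ ^ 2 = t ^ 2 * ‖u‖ ^ 2 := by
    rw [norm_neg, norm_smul, Real.norm_eq_abs, mul_pow, sq_abs]
  rw [hnrm] at hA3'
  have htri1 : ‖h (x - t • u)‖ ≤ ‖z - t • A u‖ + Ch * (t ^ 2 * ‖u‖ ^ 2) := by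
    have hdecomp : h (x - t • u) = (z - t • A u) + (h (x - t • u) - z - -(t • A u)) := by
      abel
    rw [hdecomp]
    exact le_trans (norm_add_le _ _) (by linarith [hA3'])
  -- contraction bound
  have hc0 : 0 ≤ 2 * β * t := by positivity
  have hcA : (2 * β * t) * ‖A‖ ^ 2 ≤ 1 := by
    have h1 : t * (2 * β * ‖A‖ ^ 2) ≤ 1 := by
      rw [← le_div_iff₀ (by positivity)]
      exact ht3.trans (le_of_eq (by ring_nf))
    nlinarith
  have hM : 0 ≤ 1 - (2 * β * t) * σ ^ 2 := by
    have : (2 * β * t) * σ ^ 2 ≤ (2 * β * t) * ‖A‖ ^ 2 := by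
      apply mul_le_mul_of_nonneg_left _ hc0
      exact pow_le_pow_left₀ hσpos.le hσs1 2
    linarith
  have hup : ∀ w : EuclideanSpace ℝ (Fin m), (2 * β * t) * ‖A' w‖ ^ 2 ≤ ‖w‖ ^ 2 := by
    intro w
    have h1 : ‖A' w‖ ≤ ‖A‖ * ‖w‖ := by
      calc ‖A' w‖ ≤ ‖A'‖ * ‖w‖ := A'.le_opNorm w
        _ = ‖A‖ * ‖w‖ := by rw [hAA']
    have h2 : ‖A' w‖ ^ 2 ≤ ‖A‖ ^ 2 * ‖w‖ ^ 2 := by nlinarith [norm_nonneg (A' w), norm_nonneg w]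
    have h3 : (2 * β * t) * ‖A' w‖ ^ 2 ≤ (2 * β * t) * (‖A‖ ^ 2 * ‖w‖ ^ 2) :=
      mul_le_mul_of_nonneg_left h2 hc0
    have h4 : (2 * β * t) * (‖A‖ ^ 2 * ‖w‖ ^ 2) = ((2 * β * t) * ‖A‖ ^ 2) * ‖w‖ ^ 2 := by ring
    have h5 : ((2 * β * t) * ‖A‖ ^ 2) * ‖w‖ ^ 2 ≤ 1 * ‖w‖ ^ 2 :=
      mul_le_mul_of_nonneg_right hcA (sq_nonneg _)
    linarith
  have hcontr : ‖z - (2 * β * t) • (A (A' z))‖ ≤ (1 - (2 * β * t) * σ ^ 2) * ‖z‖ := by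
    have h0 := psd_contraction A' (2 * β * t) σ hc0 hσpos.le hM hAlow hup z
    have hadj : ContinuousLinearMap.adjoint A' = A := ContinuousLinearMap.adjoint_adjoint A
    rw [hadj] at h0
    exact h0
  have hLnorm : ‖A ((ContinuousLinearMap.adjoint L) z)‖ ≤ ‖A‖ * (Cl * ‖z‖) := by
    have h1 : ‖(ContinuousLinearMap.adjoint L) z‖ ≤ Cl * ‖z‖ := by
      have h2 : ‖ContinuousLinearMap.adjoint L‖ = ‖L‖ :=
        ContinuousLinearMap.adjoint.norm_map L
      calc ‖(ContinuousLinearMap.adjoint L) z‖ ≤ ‖ContinuousLinearMap.adjoint L‖ * ‖z‖ :=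
            (ContinuousLinearMap.adjoint L).le_opNorm z
        _ = Cl * ‖z‖ := by rw [h2]; rfl
    calc ‖A ((ContinuousLinearMap.adjoint L) z)‖ ≤ ‖A‖ * ‖(ContinuousLinearMap.adjoint L) z‖ :=
          A.le_opNorm _
      _ ≤ ‖A‖ * (Cl * ‖z‖) := mul_le_mul_of_nonneg_left h1 (norm_nonneg A)
  have htri2 : ‖z - t • A u‖ ≤ (1 - (2 * β * t) * σ ^ 2) * ‖z‖ + t * (‖A‖ * (Cl * ‖z‖)) := by
    have hsplit : z - t • A u
        = (z - (2 * β * t) • (A (A' z))) + t • (A ((ContinuousLinearMap.adjoint L) z)) := by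
      rw [hAu]
      rw [smul_sub, smul_smul]
      ring_nf
      abel
    rw [hsplit]
    refine le_trans (norm_add_le _ _) ?_
    have h1 : ‖t • (A ((ContinuousLinearMap.adjoint L) z))‖ ≤ t * (‖A‖ * (Cl * ‖z‖)) := by
      rw [norm_smul, Real.norm_eq_abs, abs_of_nonneg ht0]
      exact mul_le_mul_of_nonneg_left hLnorm ht0
    linarith [hcontr]
  -- final arithmetic
  have hzR : ‖z‖ ≤ R := hx
  have hun : 0 < ‖u‖ := norm_pos_iff.mpr hu0
  have hcoef : 0 ≤ 1 - t * (2 * β * σ ^ 2 - ‖A‖ * Cl) := by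
    have h1 : 0 ≤ t * (‖A‖ * Cl) := by positivity
    have h2 : 1 - t * (2 * β * σ ^ 2 - ‖A‖ * Cl) = (1 - (2 * β * t) * σ ^ 2) + t * (‖A‖ * Cl) := by
      ring
    rw [h2]
    linarith [hM]
  have hstep1 : (1 - (2 * β * t) * σ ^ 2) * ‖z‖ + t * (‖A‖ * (Cl * ‖z‖))
      = (1 - t * (2 * β * σ ^ 2 - ‖A‖ * Cl)) * ‖z‖ := by ring
  have hstep2 : (1 - t * (2 * β * σ ^ 2 - ‖A‖ * Cl)) * ‖z‖
      ≤ (1 - t * (2 * β * σ ^ 2 - ‖A‖ * Cl)) * R := mul_le_mul_of_nonneg_left hzR hcoef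
  have hbound : Ch * (t ^ 2 * ‖u‖ ^ 2) ≤ t * ((2 * β * σ ^ 2 - ‖A‖ * Cl) * R) / 2 := by
    have h1 : t * (2 * Ch * ‖u‖ ^ 2) ≤ (2 * β * σ ^ 2 - ‖A‖ * Cl) * R := by
      rw [← le_div_iff₀ (by positivity)]
      exact ht2
    have h2 := mul_le_mul_of_nonneg_left h1 (by linarith : (0:ℝ) ≤ t / 2)
    have h3 : Ch * (t ^ 2 * ‖u‖ ^ 2) = (t / 2) * (t * (2 * Ch * ‖u‖ ^ 2)) := by ring
    have h4 : t * ((2 * β * σ ^ 2 - ‖A‖ * Cl) * R) / 2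
        = (t / 2) * ((2 * β * σ ^ 2 - ‖A‖ * Cl) * R) := by ring
    linarith
  have hfin : ‖h (x - t • u)‖
      ≤ (1 - t * (2 * β * σ ^ 2 - ‖A‖ * Cl)) * R + t * ((2 * β * σ ^ 2 - ‖A‖ * Cl) * R) / 2 := by
    calc ‖h (x - t • u)‖ ≤ ‖z - t • A u‖ + Ch * (t ^ 2 * ‖u‖ ^ 2) := htri1
      _ ≤ (1 - (2 * β * t) * σ ^ 2) * ‖z‖ + t * (‖A‖ * (Cl * ‖z‖)) + Ch * (t ^ 2 * ‖u‖ ^ 2) := by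
          linarith [htri2]
      _ ≤ (1 - t * (2 * β * σ ^ 2 - ‖A‖ * Cl)) * R + t * ((2 * β * σ ^ 2 - ‖A‖ * Cl) * R) / 2 := by
          rw [hstep1] at *
          linarith [hstep2, hbound]
  have hlast : 0 ≤ t * ((2 * β * σ ^ 2 - ‖A‖ * Cl) * R) := by
    apply mul_nonneg ht0
    apply mul_nonneg _ hR.le
    linarith [hKc]
  linarith [hfin, hlast]
end
end
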